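/- arXiv:2006.02897 — 13 statements merged into one kernel-verified Lean document; each statement's English description precedes it below -/
import Mathlib

section
/- Let k ≥ 1 and let m, n be integers with 1 ≤ m ≤ k and 2 ≤ n ≤ k. Let G be a finite abelian group (written additively) containing the following elements: t_1,…,t_{r_α} with 2·t_i = 0; for each s = 1,…,m, elements a_{s,1},…,a_{s,r_s}, each of order exactly 2s+1; elements b_1,…,b_{r_ω}, each of order greater than 2k+1; for each h = 2,…,n, elements c_{h,1},…,c_{h,z_h}, each of order exactly h+1; and elements d_1,…,d_{z_ω}, each of order greater than k+1. Suppose that every g ∈ G can be written as g = Σ_i ε_i·t_i + Σ_{s,j} α_{s,j}·a_{s,j} + Σ_j β_j·b_j + Σ_{h,j} γ_{h,j}·c_{h,j} + Σ_j δ_j·d_j with ε_i, γ_{h,j}, δ_j ∈ ℕ, α_{s,j}, β_j ∈ ℤ, and Σ ε_i + Σ |α_{s,j}| + Σ |β_j| + Σ γ_{h,j} + Σ δ_j ≤ k. Then |G| ≤ Σ C(r_α, i_α) · C(r_ω, i_ω) · 2^{i_ω} · Π_{h=1}^{m} [ 2^{|σ^{(h)}|} · r_h! / ( σ^{(h)}_1!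 ⋯ σ^{(h)}_h! · (r_h − |σ^{(h)}|)! ) ] · Π_{h=2}^{n} [ z_h! / ( τ^{(h)}_1! ⋯ τ^{(h)}_h! · (z_h − |τ^{(h)}|)! ) ] · C( z_ω + k − i_α − Σ_{h=1}^{m} Σ_{t=1}^{h} t·σ^{(h)}_t − Σ_{h=2}^{n} Σ_{t=1}^{h} t·τ^{(h)}_t , i_ω + z_ω ), where the outer sum ranges over all i_α ∈ {0,…,r_α}, i_ω ∈ {0,…,r_ω}, all tuples σ^{(h)} = (σ^{(h)}_1,…,σ^{(h)}_h) ∈ ℕ^h with |σ^{(h)}| := σ^{(h)}_1+⋯+σ^{(h)}_h ≤ r_h for h = 1,…,m, and all tuples τ^{(h)} = (τ^{(h)}_1,…,τ^{(h)}_h) ∈ ℕ^h with |τ^{(h)}| ≤ z_h for h = 2,…,n; here C(a,b) denotes the binomial coefficient, with the convention that C(a,b) = 0 whenever a is negative or a < b. -/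
/-!
Every `g ∈ G` is the value of a word of length at most `k`. Reducing the coefficients of the
involutions modulo `2`, those of the `a_{s,j}` to balanced residues modulo `2s + 1` and those of
the `c_{h,j}` modulo `h + 1` does not lengthen the word, so `|G|` is at most the number of reduced
words of length at most `k`. Sort these by their profile: the numbers `i_α` of involutions and
`i_ω` of `b`'s that occur, and for every `h` the numbers `σ⁽ʰ⁾_t`, `τ⁽ʰ⁾_t` of coefficients of
absolute value `t`. For a fixed profile the coefficients of the `a`'s and `c`'s are placed in
multinomially many ways (with `2^{|σ⁽ʰ⁾|}` choices of signs), the support of the `b`-coefficients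
in `C(r_ω, i_ω)` ways with `2^{i_ω}` signs, and the length still available,
`k - i_α - Σ t·σ⁽ʰ⁾_t - Σ t·τ⁽ʰ⁾_t`, is spread by stars and bars over the `i_ω` nonzero
`b`-coefficients (beyond their first unit) and the `z_ω` coefficients of the `d`'s.
-/

open Finset
open scoped Nat

section EraseTop

variable {ι : Type*}

def eraseTop (h : ℕ) (f : ι → ℕ) : ι → ℕ := fun j => if f j = h + 1 then 0 else f j

lemma eraseTop_le {h : ℕ} {f : ι → ℕ} (hf : ∀ j, f j ≤ h + 1) (j : ι) : eraseTop h f j ≤ h := by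
  have := hf j
  unfold eraseTop
  split_ifs <;> omega

end EraseTop

section Counting

variable {ι : Type*} [Fintype ι]

-- The paper's `σ_t` is `valueProfile h f (t - 1)`.
def valueProfile (h : ℕ) (f : ι → ℕ) : Fin h → ℕ := fun i => #{j | f j = i + 1}

lemma card_filter_eq_zero_add_sum_valueProfile {h : ℕ} {f : ι → ℕ} (hf : ∀ j, f j ≤ h) :
    #{j | f j = 0} + ∑ i, valueProfile h f i = Fintype.card ι := by
  have hfib := sum_card_fiberwise_eq_card_filter univ (range (h + 1)) f
  rw [sum_range_succ', ← Fin.sum_univ_eq_sum_range (fun v => #{j | f j = v + 1}),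
    filter_true_of_mem (fun j _ => mem_range_succ_iff.2 (hf j)), card_univ] at hfib
  rw [← hfib, add_comm]
  rfl

lemma card_filter_ne_zero_eq_sum_valueProfile {h : ℕ} {f : ι → ℕ} (hf : ∀ j, f j ≤ h) :
    #{j | f j ≠ 0} = ∑ i, valueProfile h f i := by
  have := card_filter_eq_zero_add_sum_valueProfile hf
  have := card_filter_add_card_filter_not (s := univ) (fun j => f j = 0)
  rw [card_univ] at this
  simp only [ne_eq]
  omega

lemma sum_eq_sum_mul_valueProfile {h : ℕ} {f : ι → ℕ} (hf : ∀ j, f j ≤ h) :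
    ∑ j, f j = ∑ i : Fin h, (i + 1) * valueProfile h f i := by
  calc ∑ j, f j = ∑ v ∈ range (h + 1), ∑ j with f j = v, f j :=
        (sum_fiberwise_of_maps_to (fun j _ => mem_range_succ_iff.2 (hf j)) _).symm
    _ = ∑ v ∈ range (h + 1), v * #{j | f j = v} := by
        refine sum_congr rfl fun v _ => ?_
        rw [sum_congr rfl fun j hj => (mem_filter.1 hj).2, sum_const, smul_eq_mul, mul_comm]
    _ = ∑ i : Fin h, (i + 1) * valueProfile h f i := by
        rw [sum_range_succ', zero_mul, add_zero,
          ← Fin.sum_univ_eq_sum_range (fun v => (v + 1) * #{j | f j = v + 1})]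
        rfl

lemma valueProfile_eraseTop (h : ℕ) (f : ι → ℕ) (i : Fin h) :
    valueProfile h (eraseTop h f) i = valueProfile (h + 1) f i.castSucc := by
  simp only [valueProfile, Fin.val_castSucc]
  congr 1
  ext j
  simp only [mem_filter, mem_univ, true_and]
  have := i.isLt
  unfold eraseTop
  split_ifs
  · simp only [false_iff]; omega
  · rfl

lemma card_filter_eraseTop_eq_le [DecidableEq ι] {h c : ℕ} (F : Finset (ι → ℕ))
    (hF : ∀ f ∈ F, #{j | f j = h + 1} = c) (g : ι → ℕ) :
    #{f ∈ F | eraseTop h f = g} ≤ (#{j | g j = 0}).choose c := by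
  rw [← card_powersetCard]
  refine card_le_card_of_injOn (fun f => ({j | f j = h + 1} : Finset ι))
    (fun f hf => ?_) (fun f hf f' hf' hff' => ?_)
  · obtain ⟨hfF, rfl⟩ := mem_filter.1 hf
    refine mem_powersetCard.2 ⟨fun j hj => ?_, hF f hfF⟩
    simp only [mem_filter, mem_univ, true_and] at hj ⊢
    simp [eraseTop, hj]
  · obtain ⟨_, hfg⟩ := mem_filter.1 hf
    obtain ⟨_, hfg'⟩ := mem_filter.1 hf'
    funext j
    have hj := congrFun (hfg.trans hfg'.symm) j
    have hj' := Finset.ext_iff.1 hff' j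
    simp only [mem_filter, mem_univ, true_and, eraseTop] at hj hj'
    split_ifs at hj <;> omega

lemma choose_mul_factorial_mul_factorial_le (n k : ℕ) : n.choose k * k ! * (n - k)! ≤ n ! := by
  rcases le_or_gt k n with hkn | hnk
  · exact (Nat.choose_mul_factorial_mul_factorial hkn).le
  · simp [Nat.choose_eq_zero_of_lt hnk]

-- Erasing the top value `h + 1` leaves a function counted by induction; within a fibre the
-- function is recovered from where it took the value `h + 1`, a subset of the zero set.
lemma card_mul_prod_factorial_le [DecidableEq ι] {h : ℕ} (τ : Fin h → ℕ) (F : Finset (ι → ℕ))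
    (hF : ∀ f ∈ F, (∀ j, f j ≤ h) ∧ valueProfile h f = τ) :
    #F * ((∏ i, (τ i)!) * (Fintype.card ι - ∑ i, τ i)!) ≤ (Fintype.card ι)! := by
  induction h generalizing F with
  | zero =>
    have hF1 : #F ≤ 1 := card_le_one.2 fun f hf g hg => funext fun j => by
      have := (hF f hf).1 j; have := (hF g hg).1 j; omega
    simpa using Nat.mul_le_mul_right (Fintype.card ι)! hF1
  | succ h ih =>
    set N := Fintype.card ι
    set τ' : Fin h → ℕ := fun i => τ i.castSucc
    set c := τ (Fin.last h)
    have hF' : ∀ g ∈ F.image (eraseTop h), (∀ j, g j ≤ h) ∧ valueProfile h g = τ' := by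
      intro g hg
      obtain ⟨f, hf, rfl⟩ := mem_image.1 hg
      exact ⟨eraseTop_le (hF f hf).1, funext fun i => by
        rw [valueProfile_eraseTop, (hF f hf).2]⟩
    have hfiber : ∀ g ∈ F.image (eraseTop h), #{f ∈ F | eraseTop h f = g} ≤
        (N - ∑ i, τ' i).choose c := by
      intro g hg
      have := card_filter_eq_zero_add_sum_valueProfile (hF' g hg).1
      rw [(hF' g hg).2] at this
      rw [show N - ∑ i, τ' i = #{j | g j = 0} by omega]
      exact card_filter_eraseTop_eq_le F (fun f hf => congrFun (hF f hf).2 (Fin.last h)) g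
    have hprod : ∏ i, (τ i)! = (∏ i, (τ' i)!) * c ! := Fin.prod_univ_castSucc _
    have hsum : N - ∑ i, τ i = N - ∑ i, τ' i - c := by
      rw [Fin.sum_univ_castSucc, Nat.sub_sub]
    calc #F * ((∏ i, (τ i)!) * (N - ∑ i, τ i)!)
        ≤ (N - ∑ i, τ' i).choose c * #(F.image (eraseTop h)) *
            ((∏ i, (τ' i)!) * c ! * (N - ∑ i, τ' i - c)!) := by
          rw [hprod, hsum]
          gcongr
          exact card_le_mul_card_image F _ hfiber
      _ = #(F.image (eraseTop h)) * ((∏ i, (τ' i)!) *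
            ((N - ∑ i, τ' i).choose c * c ! * (N - ∑ i, τ' i - c)!)) := by ring
      _ ≤ #(F.image (eraseTop h)) * ((∏ i, (τ' i)!) * (N - ∑ i, τ' i)!) := by
          gcongr
          exact choose_mul_factorial_mul_factorial_le _ _
      _ ≤ N ! := ih τ' _ hF'

def signedLifts [DecidableEq ι] (g : ι → ℕ) : Finset (ι → ℤ) :=
  Fintype.piFinset fun j => {(g j : ℤ), -(g j : ℤ)}

lemma mem_signedLifts [DecidableEq ι] {g : ι → ℕ} {f : ι → ℤ} (hf : ∀ j, (f j).natAbs = g j) :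
    f ∈ signedLifts g :=
  Fintype.mem_piFinset.2 fun j => by
    rcases Int.natAbs_eq (f j) with h | h <;> simp [hf j ▸ h]

lemma card_signedLifts [DecidableEq ι] (g : ι → ℕ) : #(signedLifts g) = 2 ^ #{j | g j ≠ 0} := by
  rw [signedLifts, Fintype.card_piFinset]
  calc ∏ j, #{(g j : ℤ), -(g j : ℤ)} = ∏ j, if g j ≠ 0 then 2 else 1 := by
        refine prod_congr rfl fun j _ => ?_
        split_ifs with hj
        · exact card_pair (by omega)
        · simp [not_not.1 hj]
    _ = 2 ^ #{j | g j ≠ 0} := by rw [prod_ite, prod_const, prod_const_one, mul_one]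

-- Stars and bars, with a slack coordinate `none` making the sum exactly `B`.
lemma card_le_choose_of_sum_le [DecidableEq ι] (F : Finset (ι → ℕ)) {B : ℕ}
    (hF : ∀ f ∈ F, ∑ j, f j ≤ B) :
    #F ≤ (B + Fintype.card ι).choose (Fintype.card ι) := by
  let e (f : F) : Sym (Option ι) B := (Sym.equivNatSumOfFintype (Option ι) B).symm
    ⟨fun o => o.elim (B - ∑ j, f.1 j) f.1, by
      have := hF f.1 f.2
      rw [Fintype.sum_option]; simp only [Option.elim]; omega⟩
  have he : Function.Injective e := fun f f' hff' => by
    have := congrArg (fun s => Sym.equivNatSumOfFintype (Option ι) B s) hff'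
    simp only [e, Equiv.apply_symm_apply, Subtype.mk.injEq] at this
    exact Subtype.ext (funext fun j => congrFun this (some j))
  calc #F = Fintype.card F := (Fintype.card_coe F).symm
    _ ≤ Fintype.card (Sym (Option ι) B) := Fintype.card_le_of_injective e he
    _ = (B + Fintype.card ι).choose (Fintype.card ι) := by
      rw [Sym.card_sym_eq_choose, Fintype.card_option,
        show Fintype.card ι + 1 + B - 1 = B + Fintype.card ι by omega, Nat.choose_symm_add]

lemma card_le_factorial_div [DecidableEq ι] {h : ℕ} (τ : Fin h → ℕ) (F : Finset (ι → ℕ))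
    (hF : ∀ f ∈ F, (∀ j, f j ≤ h) ∧ valueProfile h f = τ) :
    #F ≤ (Fintype.card ι)! / ((∏ i, (τ i)!) * (Fintype.card ι - ∑ i, τ i)!) :=
  (Nat.le_div_iff_mul_le (by positivity)).2 (card_mul_prod_factorial_le τ F hF)

lemma card_le_two_pow_mul_factorial_div [DecidableEq ι] {h : ℕ} (σ : Fin h → ℕ)
    (F : Finset (ι → ℤ))
    (hF : ∀ f ∈ F, (∀ j, (f j).natAbs ≤ h) ∧ valueProfile h (fun j => (f j).natAbs) = σ) :
    #F ≤ 2 ^ (∑ i, σ i) *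
      ((Fintype.card ι)! / ((∏ i, (σ i)!) * (Fintype.card ι - ∑ i, σ i)!)) := by
  let mag (f : ι → ℤ) : ι → ℕ := fun j => (f j).natAbs
  calc #F ≤ 2 ^ (∑ i, σ i) * #(F.image mag) := card_le_mul_card_image F _ fun g hg => by
        obtain ⟨f, hf, rfl⟩ := mem_image.1 hg
        calc #{f' ∈ F | mag f' = mag f} ≤ #(signedLifts (mag f)) :=
              card_le_card fun f' hf' => mem_signedLifts fun j => congrFun (mem_filter.1 hf').2 j
          _ = 2 ^ ∑ i, σ i := by
              rw [card_signedLifts, card_filter_ne_zero_eq_sum_valueProfile (hF f hf).1,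
                (hF f hf).2]
    _ ≤ _ := by
        gcongr
        refine card_le_factorial_div σ _ fun g hg => ?_
        obtain ⟨f, hf, rfl⟩ := mem_image.1 hg
        exact hF f hf

-- On the support `S`, a pair `q` is encoded by `q.1 - 1` on `S` together with `q.2`.
lemma card_le_choose_of_support_eq [DecidableEq ι] {κ : Type*} [Fintype κ] [DecidableEq κ]
    (S : Finset ι) (F : Finset ((ι → ℕ) × (κ → ℕ))) {B : ℕ}
    (hF : ∀ q ∈ F, ({j | q.1 j ≠ 0} : Finset ι) = S ∧ ∑ j, q.1 j + ∑ j, q.2 j ≤ B) :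
    #F ≤ (B + Fintype.card κ).choose (#S + Fintype.card κ) := by
  let enc (q : (ι → ℕ) × (κ → ℕ)) : S ⊕ κ → ℕ := Sum.elim (fun j => q.1 j - 1) q.2
  have hmem : ∀ q ∈ F, ∀ j, j ∈ S ↔ q.1 j ≠ 0 := fun q hq j => by
    rw [← (hF q hq).1]; simp
  have henc : ∀ q ∈ F, ∑ x, enc q x + #S ≤ B := by
    intro q hq
    have hsum : ∑ j ∈ S, (q.1 j - 1) + #S = ∑ j, q.1 j := by
      rw [card_eq_sum_ones, ← sum_add_distrib, sum_congr rfl fun j hj =>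
        Nat.sub_add_cancel (Nat.one_le_iff_ne_zero.2 ((hmem q hq j).1 hj)), ← (hF q hq).1]
      exact sum_filter_ne_zero _
    have := (hF q hq).2
    rw [Fintype.sum_sum_type]
    simp only [enc, Sum.elim_inl, Sum.elim_inr, sum_coe_sort S (fun j => q.1 j - 1)]
    omega
  have hinj : Set.InjOn enc F := by
    intro q hq q' hq' hqq'
    refine Prod.ext (funext fun j => ?_) (funext fun j => congrFun hqq' (Sum.inr j))
    by_cases hj : j ∈ S
    · have := congrFun hqq' (Sum.inl ⟨j, hj⟩)
      have h₁ := (hmem q hq j).1 hj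
      have h₂ := (hmem q' hq' j).1 hj
      simp only [enc, Sum.elim_inl] at this
      omega
    · have h₁ := (hmem q hq j).not.1 hj
      have h₂ := (hmem q' hq' j).not.1 hj
      omega
  rcases F.eq_empty_or_nonempty with rfl | ⟨q₀, hq₀⟩
  · simp
  calc #F = #(F.image enc) := (card_image_of_injOn hinj).symm
    _ ≤ (B - #S + Fintype.card (S ⊕ κ)).choose (Fintype.card (S ⊕ κ)) := by
        refine card_le_choose_of_sum_le _ fun x hx => ?_
        obtain ⟨q, hq, rfl⟩ := mem_image.1 hx
        have := henc q hq
        omega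
    _ = (B + Fintype.card κ).choose (#S + Fintype.card κ) := by
        have := henc q₀ hq₀
        rw [Fintype.card_sum, Fintype.card_coe, ← Nat.add_assoc, Nat.sub_add_cancel (by omega)]

lemma card_le_choose_mul_choose [DecidableEq ι] {κ : Type*} [Fintype κ] [DecidableEq κ]
    (F : Finset ((ι → ℕ) × (κ → ℕ))) {i B : ℕ}
    (hF : ∀ q ∈ F, #{j | q.1 j ≠ 0} = i ∧ ∑ j, q.1 j + ∑ j, q.2 j ≤ B) :
    #F ≤ (Fintype.card ι).choose i * (B + Fintype.card κ).choose (i + Fintype.card κ) := by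
  let supp (q : (ι → ℕ) × (κ → ℕ)) : Finset ι := {j | q.1 j ≠ 0}
  calc #F ≤ (B + Fintype.card κ).choose (i + Fintype.card κ) * #(F.image supp) :=
        card_le_mul_card_image F _ fun S hS => by
          obtain ⟨q, hq, rfl⟩ := mem_image.1 hS
          rw [← (hF q hq).1]
          exact card_le_choose_of_support_eq _ _ fun q' hq' =>
            ⟨(mem_filter.1 hq').2, (hF q' (mem_filter.1 hq').1).2⟩
    _ ≤ (B + Fintype.card κ).choose (i + Fintype.card κ) * #(powersetCard i univ) := by
        gcongr
        intro S hS
        obtain ⟨q, hq, rfl⟩ := mem_image.1 hS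
        exact mem_powersetCard.2 ⟨subset_univ _, (hF q hq).1⟩
    _ = _ := by rw [card_powersetCard, card_univ, mul_comm]

lemma card_le_choose_mul_two_pow_mul_choose [DecidableEq ι] {κ : Type*} [Fintype κ] [DecidableEq κ]
    (F : Finset ((ι → ℤ) × (κ → ℕ))) {i B : ℕ}
    (hF : ∀ p ∈ F, #{j | p.1 j ≠ 0} = i ∧ ∑ j, (p.1 j).natAbs + ∑ j, p.2 j ≤ B) :
    #F ≤ (Fintype.card ι).choose i * 2 ^ i * (B + Fintype.card κ).choose (i + Fintype.card κ) := by
  let mag (p : (ι → ℤ) × (κ → ℕ)) : (ι → ℕ) × (κ → ℕ) := (fun j => (p.1 j).natAbs, p.2)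
  have hsupp : ∀ p : (ι → ℤ) × (κ → ℕ), #{j | (mag p).1 j ≠ 0} = #{j | p.1 j ≠ 0} := by
    intro p; simp [mag]
  calc #F ≤ 2 ^ i * #(F.image mag) := card_le_mul_card_image F _ fun q hq => by
        obtain ⟨p, hp, rfl⟩ := mem_image.1 hq
        calc #{p' ∈ F | mag p' = mag p} ≤ #(signedLifts (mag p).1 ×ˢ {p.2}) := by
              refine card_le_card fun p' hp' => ?_
              have := (mem_filter.1 hp').2
              simp only [mag, Prod.mk.injEq] at this
              exact mem_product.2
                ⟨mem_signedLifts fun j => congrFun this.1 j, mem_singleton.2 this.2⟩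
          _ = 2 ^ i := by
              rw [card_product, card_signedLifts, hsupp, (hF p hp).1, card_singleton, mul_one]
    _ ≤ 2 ^ i * ((Fintype.card ι).choose i * (B + Fintype.card κ).choose (i + Fintype.card κ)) := by
        gcongr
        refine card_le_choose_mul_choose _ fun q hq => ?_
        obtain ⟨p, hp, rfl⟩ := mem_image.1 hq
        exact ⟨(hsupp p).trans (hF p hp).1, (hF p hp).2⟩
    _ = _ := by ring

end Counting

namespace MixedCayley

section Blocks

variable (s : Finset ℕ) (r : ℕ → ℕ)

def profiles : Finset (∀ h ∈ s, Fin h → ℕ) :=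
  s.pi fun h => {v ∈ Fintype.piFinset fun _ : Fin h => range (r h + 1) | ∑ i, v i ≤ r h}

def profileWeight (σ : ∀ h ∈ s, Fin h → ℕ) : ℕ :=
  ∑ h ∈ s.attach, ∑ i : Fin h.1, (i.1 + 1) * σ h.1 h.2 i

def blockProfile (x : ∀ h ∈ s, Fin (r h) → ℕ) : ∀ h ∈ s, Fin h → ℕ :=
  fun h hh => valueProfile h (x h hh)

noncomputable def signedCell (σ : ∀ h ∈ s, Fin h → ℕ) : Finset (∀ h ∈ s, Fin (r h) → ℤ) :=
  s.pi fun h => {f ∈ Fintype.piFinset fun _ => Icc (-(h : ℤ)) h |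
    ∀ hh : h ∈ s, valueProfile h (fun j => (f j).natAbs) = σ h hh}

def unsignedCell (τ : ∀ h ∈ s, Fin h → ℕ) : Finset (∀ h ∈ s, Fin (r h) → ℕ) :=
  s.pi fun h => {f ∈ Fintype.piFinset fun _ => range (h + 1) |
    ∀ hh : h ∈ s, valueProfile h f = τ h hh}

variable {s r}

lemma blockProfile_mem_profiles {x : ∀ h ∈ s, Fin (r h) → ℕ} (hx : ∀ h hh j, x h hh j ≤ h) :
    blockProfile s r x ∈ profiles s r := by
  refine mem_pi.2 fun h hh => ?_
  have hsum := card_filter_eq_zero_add_sum_valueProfile (hx h hh)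
  rw [Fintype.card_fin] at hsum
  refine mem_filter.2 ⟨Fintype.mem_piFinset.2 fun i => mem_range_succ_iff.2 ?_,
    by unfold blockProfile; omega⟩
  exact (single_le_sum (fun _ _ => Nat.zero_le _) (mem_univ i)).trans
    (by unfold blockProfile; omega)

lemma profileWeight_blockProfile {x : ∀ h ∈ s, Fin (r h) → ℕ} (hx : ∀ h hh j, x h hh j ≤ h) :
    profileWeight s (blockProfile s r x) = ∑ h ∈ s.attach, ∑ j, x h.1 h.2 j :=
  sum_congr rfl fun h _ => (sum_eq_sum_mul_valueProfile (hx h.1 h.2)).symm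

lemma mem_signedCell {α : ∀ h ∈ s, Fin (r h) → ℤ} (hα : ∀ h hh j, (α h hh j).natAbs ≤ h) :
    α ∈ signedCell s r (blockProfile s r fun h hh j => (α h hh j).natAbs) :=
  mem_pi.2 fun h hh => mem_filter.2 ⟨Fintype.mem_piFinset.2 fun j => mem_Icc.2 (by
    have := hα h hh j; omega), fun _ => rfl⟩

lemma mem_unsignedCell {γ : ∀ h ∈ s, Fin (r h) → ℕ} (hγ : ∀ h hh j, γ h hh j ≤ h) :
    γ ∈ unsignedCell s r (blockProfile s r γ) :=
  mem_pi.2 fun h hh => mem_filter.2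
    ⟨Fintype.mem_piFinset.2 fun j => mem_range_succ_iff.2 (hγ h hh j), fun _ => rfl⟩

lemma card_signedCell_le (σ : ∀ h ∈ s, Fin h → ℕ) :
    #(signedCell s r σ) ≤ ∏ h ∈ s.attach, 2 ^ (∑ i, σ h.1 h.2 i) *
      ((r h.1)! / ((∏ i, (σ h.1 h.2 i)!) * (r h.1 - ∑ i, σ h.1 h.2 i)!)) := by
  rw [signedCell, card_pi, ← prod_attach]
  refine prod_le_prod' fun h _ => ?_
  refine le_of_le_of_eq (card_le_two_pow_mul_factorial_div (σ h.1 h.2) _ fun f hf =>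
    ⟨fun j => ?_, (mem_filter.1 hf).2 h.2⟩) (by rw [Fintype.card_fin])
  have := mem_Icc.1 (Fintype.mem_piFinset.1 (mem_filter.1 hf).1 j)
  omega

lemma card_unsignedCell_le (τ : ∀ h ∈ s, Fin h → ℕ) :
    #(unsignedCell s r τ) ≤ ∏ h ∈ s.attach,
      (r h.1)! / ((∏ i, (τ h.1 h.2 i)!) * (r h.1 - ∑ i, τ h.1 h.2 i)!) := by
  rw [unsignedCell, card_pi, ← prod_attach]
  refine prod_le_prod' fun h _ => ?_
  exact le_of_le_of_eq (card_le_factorial_div (τ h.1 h.2) _ fun f hf =>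
    ⟨fun j => mem_range_succ_iff.1 (Fintype.mem_piFinset.1 (mem_filter.1 hf).1 j),
      (mem_filter.1 hf).2 h.2⟩) (by rw [Fintype.card_fin])

end Blocks

section Words

variable (k m n rα rω zω : ℕ) (r z : ℕ → ℕ)

-- The set of involutions with odd coefficient, then the coefficients of the `a`'s, `c`'s, `b`'s
-- and `d`'s.
abbrev Word : Type :=
  Finset (Fin rα) × (∀ h ∈ Icc 1 m, Fin (r h) → ℤ) × (∀ h ∈ Icc 2 n, Fin (z h) → ℕ) ×
    (Fin rω → ℤ) × (Fin zω → ℕ)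

noncomputable def freeCell (iω w : ℕ) : Finset ((Fin rω → ℤ) × (Fin zω → ℕ)) :=
  {q ∈ Fintype.piFinset (fun _ => Icc (-(k : ℤ)) k) ×ˢ Fintype.piFinset (fun _ => range (k + 1)) |
    #{j | q.1 j ≠ 0} = iω ∧ w + (∑ j, (q.1 j).natAbs + ∑ j, q.2 j) ≤ k}

noncomputable def wordCell (iα iω : ℕ) (σ : ∀ h ∈ Icc 1 m, Fin h → ℕ)
    (τ : ∀ h ∈ Icc 2 n, Fin h → ℕ) : Finset (Word m n rα rω zω r z) :=
  powersetCard iα univ ×ˢ signedCell (Icc 1 m) r σ ×ˢ unsignedCell (Icc 2 n) z τ ×ˢ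
    freeCell k rω zω iω (iα + profileWeight (Icc 1 m) σ + profileWeight (Icc 2 n) τ)

variable {k m n rα rω zω r z}

def Word.eval {G : Type*} [AddCommGroup G] (t : Fin rα → G) (a : ℕ → ℕ → G) (b : Fin rω → G)
    (c : ℕ → ℕ → G) (d : Fin zω → G) (x : Word m n rα rω zω r z) : G :=
  ∑ i ∈ x.1, t i + ∑ h ∈ (Icc 1 m).attach, ∑ j, x.2.1 h.1 h.2 j • a h.1 j +
    ∑ h ∈ (Icc 2 n).attach, ∑ j, x.2.2.1 h.1 h.2 j • c h.1 j +
    (∑ j, x.2.2.2.1 j • b j + ∑ j, x.2.2.2.2 j • d j)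

variable (k) in
def Word.IsReduced (x : Word m n rα rω zω r z) : Prop :=
  (∀ h hh j, (x.2.1 h hh j).natAbs ≤ h) ∧ (∀ h hh j, x.2.2.1 h hh j ≤ h) ∧
    #x.1 + ∑ h ∈ (Icc 1 m).attach, ∑ j, (x.2.1 h.1 h.2 j).natAbs +
      ∑ h ∈ (Icc 2 n).attach, ∑ j, x.2.2.1 h.1 h.2 j +
      (∑ j, (x.2.2.2.1 j).natAbs + ∑ j, x.2.2.2.2 j) ≤ k

lemma card_freeCell_le (iω w : ℕ) :
    #(freeCell k rω zω iω w) ≤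
      rω.choose iω * 2 ^ iω * (if w ≤ zω + k then (zω + k - w).choose (iω + zω) else 0) := by
  by_cases hw : w ≤ k
  · rw [if_pos (by omega), show zω + k - w = k - w + zω by omega]
    simpa only [Fintype.card_fin] using card_le_choose_mul_two_pow_mul_choose
      (B := k - w) (freeCell k rω zω iω w) fun q hq => by
        have := (mem_filter.1 hq).2; exact ⟨this.1, by omega⟩
  · rw [freeCell, card_eq_zero.2 (filter_eq_empty_iff.2 fun q _ hq => hw (by omega))]
    exact Nat.zero_le _

lemma card_wordCell_le (iα iω : ℕ) (σ : ∀ h ∈ Icc 1 m, Fin h → ℕ)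
    (τ : ∀ h ∈ Icc 2 n, Fin h → ℕ) :
    #(wordCell k m n rα rω zω r z iα iω σ τ) ≤
      rα.choose iα * rω.choose iω * 2 ^ iω *
        (∏ h ∈ (Icc 1 m).attach, 2 ^ (∑ i, σ h.1 h.2 i) *
          ((r h.1)! / ((∏ i, (σ h.1 h.2 i)!) * (r h.1 - ∑ i, σ h.1 h.2 i)!))) *
        (∏ h ∈ (Icc 2 n).attach,
          (z h.1)! / ((∏ i, (τ h.1 h.2 i)!) * (z h.1 - ∑ i, τ h.1 h.2 i)!)) *
        (if iα + profileWeight (Icc 1 m) σ + profileWeight (Icc 2 n) τ ≤ zω + k then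
          (zω + k - (iα + profileWeight (Icc 1 m) σ + profileWeight (Icc 2 n) τ)).choose
            (iω + zω) else 0) := by
  rw [wordCell, card_product, card_product, card_product, card_powersetCard, card_univ,
    Fintype.card_fin]
  calc _ ≤ rα.choose iα * ((∏ h ∈ (Icc 1 m).attach, 2 ^ (∑ i, σ h.1 h.2 i) *
          ((r h.1)! / ((∏ i, (σ h.1 h.2 i)!) * (r h.1 - ∑ i, σ h.1 h.2 i)!))) *
        ((∏ h ∈ (Icc 2 n).attach,
          (z h.1)! / ((∏ i, (τ h.1 h.2 i)!) * (z h.1 - ∑ i, τ h.1 h.2 i)!)) *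
        (rω.choose iω * 2 ^ iω *
          (if iα + profileWeight (Icc 1 m) σ + profileWeight (Icc 2 n) τ ≤ zω + k then
            (zω + k - (iα + profileWeight (Icc 1 m) σ + profileWeight (Icc 2 n) τ)).choose
              (iω + zω) else 0)))) := by
        gcongr
        · exact card_signedCell_le σ
        · exact card_unsignedCell_le τ
        · exact card_freeCell_le iω _
    _ = _ := by ring

lemma Word.IsReduced.exists_mem_wordCell {x : Word m n rα rω zω r z} (hx : x.IsReduced k) :
    ∃ iα ∈ range (rα + 1), ∃ iω ∈ range (rω + 1), ∃ σ ∈ profiles (Icc 1 m) r,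
      ∃ τ ∈ profiles (Icc 2 n) z, x ∈ wordCell k m n rα rω zω r z iα iω σ τ := by
  obtain ⟨T, α, γ, β, δ⟩ := x
  obtain ⟨hα, hγ, hwt⟩ := hx
  dsimp only at hα hγ hwt
  have hαnat : ∀ h hh j, (fun h hh j => (α h hh j).natAbs) h hh j ≤ h := hα
  have hβ : ∑ j, (β j).natAbs ≤ k := by omega
  have hδ : ∑ j, δ j ≤ k := by omega
  refine ⟨#T, mem_range_succ_iff.2 ((card_le_univ T).trans_eq (Fintype.card_fin _)),
    #{j | β j ≠ 0}, mem_range_succ_iff.2 ((card_le_univ _).trans_eq (Fintype.card_fin _)),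
    _, blockProfile_mem_profiles hαnat, _, blockProfile_mem_profiles hγ,
    mem_product.2 ⟨mem_powersetCard.2 ⟨subset_univ T, rfl⟩, mem_product.2 ⟨mem_signedCell hα,
      mem_product.2 ⟨mem_unsignedCell hγ, mem_filter.2 ⟨mem_product.2 ⟨?_, ?_⟩, rfl, ?_⟩⟩⟩⟩⟩
  · refine Fintype.mem_piFinset.2 fun j => mem_Icc.2 ?_
    dsimp only
    have := (single_le_sum (fun j _ => Nat.zero_le ((β j).natAbs)) (mem_univ j)).trans hβ
    omega
  · exact Fintype.mem_piFinset.2 fun j =>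
      mem_range_succ_iff.2 ((single_le_sum (fun j _ => Nat.zero_le (δ j)) (mem_univ j)).trans hδ)
  · rw [profileWeight_blockProfile hαnat, profileWeight_blockProfile hγ]
    simpa only [add_assoc] using hwt

end Words

section Reduction

variable {G : Type*} [AddCommGroup G]

lemma exists_sum_eq_sum_nsmul {ι : Type*} [Fintype ι] {t : ι → G} (ht : ∀ i, 2 • t i = 0)
    (ε : ι → ℕ) : ∃ T : Finset ι, ∑ i ∈ T, t i = ∑ i, ε i • t i ∧ #T ≤ ∑ i, ε i := by
  refine ⟨({i | ε i % 2 = 1} : Finset ι), ?_, ?_⟩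
  · rw [sum_filter]
    refine sum_congr rfl fun i _ => ?_
    rw [nsmul_eq_mod_nsmul (ε i) (ht i)]
    rcases Nat.mod_two_eq_zero_or_one (ε i) with h | h <;> simp [h]
  · rw [card_eq_sum_ones, sum_filter]
    exact sum_le_sum fun i _ => by split_ifs <;> omega

lemma exists_zsmul_eq_natAbs_le {a : G} {s : ℕ} (ha : addOrderOf a = 2 * s + 1) (x : ℤ) :
    ∃ y : ℤ, y.natAbs ≤ s ∧ y.natAbs ≤ x.natAbs ∧ y • a = x • a := by
  by_cases hx : x.natAbs ≤ s
  · exact ⟨x, hx, le_rfl, rfl⟩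
  have h₁ := Int.le_bmod (x := x) (m := 2 * s + 1) (by omega)
  have h₂ := Int.bmod_le (x := x) (m := 2 * s + 1) (by omega)
  push_cast at h₁ h₂
  refine ⟨x.bmod (2 * s + 1), by omega, by omega, ?_⟩
  rw [zsmul_eq_zsmul_iff_modEq, ha]
  exact Int.bmod_emod

lemma sum_attach_sum_fin {M : Type*} [AddCommMonoid M] (s : Finset ℕ) (r : ℕ → ℕ)
    (f : ℕ → ℕ → M) :
    ∑ h ∈ s.attach, ∑ j : Fin (r h.1), f h.1 j = ∑ h ∈ s, ∑ j ∈ range (r h), f h j := by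
  rw [sum_attach s fun h => ∑ j : Fin (r h), f h j]
  exact sum_congr rfl fun h _ => Fin.sum_univ_eq_sum_range (f h) (r h)

lemma exists_balanced_block {s : Finset ℕ} {r : ℕ → ℕ} {a : ℕ → ℕ → G}
    (ha : ∀ h ∈ s, ∀ j < r h, addOrderOf (a h j) = 2 * h + 1) (α : ℕ → ℕ → ℤ) :
    ∃ α' : ∀ h ∈ s, Fin (r h) → ℤ, (∀ h hh j, (α' h hh j).natAbs ≤ h) ∧
      ∑ h ∈ s.attach, ∑ j, α' h.1 h.2 j • a h.1 j =
        ∑ h ∈ s, ∑ j ∈ range (r h), α h j • a h j ∧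
      ∑ h ∈ s.attach, ∑ j, (α' h.1 h.2 j).natAbs ≤
        ∑ h ∈ s, ∑ j ∈ range (r h), (α h j).natAbs := by
  choose α' hbound hle heq using fun h (hh : h ∈ s) (j : Fin (r h)) =>
    exists_zsmul_eq_natAbs_le (ha h hh j j.2) (α h j)
  refine ⟨α', hbound, ?_, ?_⟩ <;> rw [← sum_attach_sum_fin]
  · exact sum_congr rfl fun h _ => sum_congr rfl fun j _ => heq h.1 h.2 j
  · exact sum_le_sum fun h _ => sum_le_sum fun j _ => hle h.1 h.2 j

lemma exists_residue_block {s : Finset ℕ} {z : ℕ → ℕ} {c : ℕ → ℕ → G}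
    (hc : ∀ h ∈ s, ∀ j < z h, addOrderOf (c h j) = h + 1) (γ : ℕ → ℕ → ℕ) :
    ∃ γ' : ∀ h ∈ s, Fin (z h) → ℕ, (∀ h hh j, γ' h hh j ≤ h) ∧
      ∑ h ∈ s.attach, ∑ j, γ' h.1 h.2 j • c h.1 j =
        ∑ h ∈ s, ∑ j ∈ range (z h), γ h j • c h j ∧
      ∑ h ∈ s.attach, ∑ j, γ' h.1 h.2 j ≤ ∑ h ∈ s, ∑ j ∈ range (z h), γ h j := by
  refine ⟨fun h _ j => γ h j % (h + 1), fun h _ j => Nat.lt_succ_iff.1 (Nat.mod_lt _ h.succ_pos),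
    ?_, ?_⟩ <;> rw [← sum_attach_sum_fin]
  · refine sum_congr rfl fun h _ => sum_congr rfl fun j _ => ?_
    dsimp only
    rw [← hc h.1 h.2 j j.2, mod_addOrderOf_nsmul]
  · exact sum_le_sum fun h _ => sum_le_sum fun j _ => Nat.mod_le _ _

lemma exists_eval_eq_and_isReduced {k m n rα rω zω : ℕ} {r z : ℕ → ℕ}
    {t : Fin rα → G} {a : ℕ → ℕ → G} {b : Fin rω → G} {c : ℕ → ℕ → G} {d : Fin zω → G}
    (ht : ∀ i, 2 • t i = 0)
    (ha : ∀ s ∈ Finset.Icc 1 m, ∀ j < r s, addOrderOf (a s j) = 2 * s + 1)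
    (hc : ∀ h ∈ Finset.Icc 2 n, ∀ j < z h, addOrderOf (c h j) = h + 1)
    (hdiam : ∀ g : G, ∃ (ε : Fin rα → ℕ) (α : ℕ → ℕ → ℤ) (β : Fin rω → ℤ)
        (γ : ℕ → ℕ → ℕ) (δ : Fin zω → ℕ),
      g = (∑ i, ε i • t i)
          + (∑ s ∈ Finset.Icc 1 m, ∑ j ∈ Finset.range (r s), α s j • a s j)
          + (∑ j, β j • b j)
          + (∑ h ∈ Finset.Icc 2 n, ∑ j ∈ Finset.range (z h), γ h j • c h j)
          + (∑ j, δ j • d j) ∧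
      (∑ i, ε i)
          + (∑ s ∈ Finset.Icc 1 m, ∑ j ∈ Finset.range (r s), (α s j).natAbs)
          + (∑ j, (β j).natAbs)
          + (∑ h ∈ Finset.Icc 2 n, ∑ j ∈ Finset.range (z h), γ h j)
          + (∑ j, δ j) ≤ k) (g : G) :
    ∃ x : Word m n rα rω zω r z, x.eval t a b c d = g ∧ x.IsReduced k := by
  obtain ⟨ε, α, β, γ, δ, rfl, hwt⟩ := hdiam g
  obtain ⟨T, hT, hTcard⟩ := exists_sum_eq_sum_nsmul ht ε
  obtain ⟨α', hα'bound, hα'sum, hα'wt⟩ := exists_balanced_block ha α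
  obtain ⟨γ', hγ'bound, hγ'sum, hγ'wt⟩ := exists_residue_block hc γ
  refine ⟨(T, α', γ', β, δ), ?_, hα'bound, hγ'bound, ?_⟩
  · simp only [Word.eval]
    rw [hT, hα'sum, hγ'sum]
    abel
  · dsimp only
    omega

end Reduction

lemma card_le_sum_card_wordCell {k m n rα rω zω : ℕ} {r z : ℕ → ℕ}
    (S : Finset (Word m n rα rω zω r z)) (hS : ∀ x ∈ S, x.IsReduced k) :
    #S ≤ ∑ iα ∈ range (rα + 1), ∑ iω ∈ range (rω + 1), ∑ σ ∈ profiles (Icc 1 m) r,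
      ∑ τ ∈ profiles (Icc 2 n) z, #(wordCell k m n rα rω zω r z iα iω σ τ) := by
  classical
  calc #S ≤ #((range (rα + 1)).biUnion fun iα => (range (rω + 1)).biUnion fun iω =>
        (profiles (Icc 1 m) r).biUnion fun σ => (profiles (Icc 2 n) z).biUnion fun τ =>
          wordCell k m n rα rω zω r z iα iω σ τ) :=
        card_le_card fun x hx => by simpa only [mem_biUnion] using (hS x hx).exists_mem_wordCell
    _ ≤ _ := card_biUnion_le.trans <| sum_le_sum fun _ _ => card_biUnion_le.trans <|
        sum_le_sum fun _ _ => card_biUnion_le.trans <| sum_le_sum fun _ _ => card_biUnion_le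

end MixedCayley

open MixedCayley in
theorem stmt_0_general {G : Type*} [AddCommGroup G] [Fintype G]
    (k m n rα rω zω : ℕ) (r z : ℕ → ℕ)
    (t : Fin rα → G) (a : ℕ → ℕ → G) (b : Fin rω → G) (c : ℕ → ℕ → G)
    (d : Fin zω → G)
    (ht : ∀ i, 2 • t i = 0)
    (ha : ∀ s ∈ Finset.Icc 1 m, ∀ j < r s, addOrderOf (a s j) = 2 * s + 1)
    (hc : ∀ h ∈ Finset.Icc 2 n, ∀ j < z h, addOrderOf (c h j) = h + 1)
    (hdiam : ∀ g : G, ∃ (ε : Fin rα → ℕ) (α : ℕ → ℕ → ℤ) (β : Fin rω → ℤ)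
        (γ : ℕ → ℕ → ℕ) (δ : Fin zω → ℕ),
      g = (∑ i, ε i • t i)
          + (∑ s ∈ Finset.Icc 1 m, ∑ j ∈ Finset.range (r s), α s j • a s j)
          + (∑ j, β j • b j)
          + (∑ h ∈ Finset.Icc 2 n, ∑ j ∈ Finset.range (z h), γ h j • c h j)
          + (∑ j, δ j • d j) ∧
      (∑ i, ε i)
          + (∑ s ∈ Finset.Icc 1 m, ∑ j ∈ Finset.range (r s), (α s j).natAbs)
          + (∑ j, (β j).natAbs)
          + (∑ h ∈ Finset.Icc 2 n, ∑ j ∈ Finset.range (z h), γ h j)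
          + (∑ j, δ j) ≤ k) :
    Fintype.card G ≤
      ∑ iα ∈ Finset.range (rα + 1), ∑ iω ∈ Finset.range (rω + 1),
      ∑ σ ∈ (Finset.Icc 1 m).pi (fun h => (Fintype.piFinset
          (fun _ : Fin h => Finset.range (r h + 1))).filter
          (fun v => ∑ i, v i ≤ r h)),
      ∑ τ ∈ (Finset.Icc 2 n).pi (fun h => (Fintype.piFinset
          (fun _ : Fin h => Finset.range (z h + 1))).filter
          (fun v => ∑ i, v i ≤ z h)),
        Nat.choose rα iα * Nat.choose rω iω * 2 ^ iω *
        (∏ h ∈ (Finset.Icc 1 m).attach,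
          2 ^ (∑ i, σ h.1 h.2 i) *
            (Nat.factorial (r h.1) /
              ((∏ i, Nat.factorial (σ h.1 h.2 i)) *
                Nat.factorial (r h.1 - ∑ i, σ h.1 h.2 i)))) *
        (∏ h ∈ (Finset.Icc 2 n).attach,
          Nat.factorial (z h.1) /
            ((∏ i, Nat.factorial (τ h.1 h.2 i)) *
              Nat.factorial (z h.1 - ∑ i, τ h.1 h.2 i))) *
        (if iα + (∑ h ∈ (Finset.Icc 1 m).attach, ∑ i : Fin h.1, (i.1 + 1) * σ h.1 h.2 i)
              + (∑ h ∈ (Finset.Icc 2 n).attach, ∑ i : Fin h.1, (i.1 + 1) * τ h.1 h.2 i)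
              ≤ zω + k then
            Nat.choose
              (zω + k - (iα
                + (∑ h ∈ (Finset.Icc 1 m).attach, ∑ i : Fin h.1, (i.1 + 1) * σ h.1 h.2 i)
                + (∑ h ∈ (Finset.Icc 2 n).attach, ∑ i : Fin h.1, (i.1 + 1) * τ h.1 h.2 i)))
              (iω + zω)
          else 0) := by
  classical
  choose word hword hred using exists_eval_eq_and_isReduced ht ha hc hdiam
  calc Fintype.card G = #(univ.image word) :=
        (card_image_of_injective _ (Function.LeftInverse.injective hword)).symm
    _ ≤ _ := card_le_sum_card_wordCell _ fun x hx => by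
        obtain ⟨g, -, rfl⟩ := mem_image.1 hx
        exact hred g
    _ ≤ _ := sum_le_sum fun iα _ => sum_le_sum fun iω _ => sum_le_sum fun σ _ =>
        sum_le_sum fun τ _ => card_wordCell_le iα iω σ τ

/-- **Improved Moore bound for mixed Abelian Cayley graphs** (Theorem 1 of the paper).
Let `G` be a finite abelian group containing `r_α` involutions `tᵢ`; for each
`s = 1,…,m`, elements `a_{s,1},…,a_{s,r_s}` of order exactly `2s+1` (taken with their
inverses); elements `b₁,…,b_{r_ω}` of order `> 2k+1` (taken with their inverses);
for each `h = 2,…,n`, elements `c_{h,1},…,c_{h,z_h}` of order exactly `h+1` (without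
their inverses); and elements `d₁,…,d_{z_ω}` of order `> k+1` (without their
inverses). If the corresponding mixed Cayley graph has diameter at most `k`, then
`|G|` is bounded by the sum, over `i_α ≤ r_α`, `i_ω ≤ r_ω`, tuples
`σ⁽ʰ⁾ ∈ ℕʰ` with `|σ⁽ʰ⁾| ≤ r_h` (`h = 1,…,m`) and `τ⁽ʰ⁾ ∈ ℕʰ` with `|τ⁽ʰ⁾| ≤ z_h`
(`h = 2,…,n`), of
`C(r_α,i_α)·C(r_ω,i_ω)·2^{i_ω} · Π_h 2^{|σ⁽ʰ⁾|}·r_h!/(σ⁽ʰ⁾₁!⋯σ⁽ʰ⁾_h!(r_h−|σ⁽ʰ⁾|)!)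
· Π_h z_h!/(τ⁽ʰ⁾₁!⋯τ⁽ʰ⁾_h!(z_h−|τ⁽ʰ⁾|)!)
· C(z_ω + k − i_α − Σ_{h,t} t·σ⁽ʰ⁾_t − Σ_{h,t} t·τ⁽ʰ⁾_t, i_ω + z_ω)`,
with the convention `C(a,b) = 0` for `a` negative or `a < b`. -/
theorem stmt_0 {G : Type*} [AddCommGroup G] [Fintype G]
    (k m n rα rω zω : ℕ) (r z : ℕ → ℕ)
    (hk : 1 ≤ k) (hm1 : 1 ≤ m) (hmk : m ≤ k) (hn2 : 2 ≤ n) (hnk : n ≤ k)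
    (t : Fin rα → G) (a : ℕ → ℕ → G) (b : Fin rω → G) (c : ℕ → ℕ → G)
    (d : Fin zω → G)
    (ht : ∀ i, 2 • t i = 0)
    (ha : ∀ s ∈ Finset.Icc 1 m, ∀ j < r s, addOrderOf (a s j) = 2 * s + 1)
    (hb : ∀ i, 2 * k + 1 < addOrderOf (b i))
    (hc : ∀ h ∈ Finset.Icc 2 n, ∀ j < z h, addOrderOf (c h j) = h + 1)
    (hd : ∀ i, k + 1 < addOrderOf (d i))
    (hdiam : ∀ g : G, ∃ (ε : Fin rα → ℕ) (α : ℕ → ℕ → ℤ) (β : Fin rω → ℤ)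
        (γ : ℕ → ℕ → ℕ) (δ : Fin zω → ℕ),
      g = (∑ i, ε i • t i)
          + (∑ s ∈ Finset.Icc 1 m, ∑ j ∈ Finset.range (r s), α s j • a s j)
          + (∑ j, β j • b j)
          + (∑ h ∈ Finset.Icc 2 n, ∑ j ∈ Finset.range (z h), γ h j • c h j)
          + (∑ j, δ j • d j) ∧
      (∑ i, ε i)
          + (∑ s ∈ Finset.Icc 1 m, ∑ j ∈ Finset.range (r s), (α s j).natAbs)
          + (∑ j, (β j).natAbs)
          + (∑ h ∈ Finset.Icc 2 n, ∑ j ∈ Finset.range (z h), γ h j)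
          + (∑ j, δ j) ≤ k) :
    Fintype.card G ≤
      ∑ iα ∈ Finset.range (rα + 1), ∑ iω ∈ Finset.range (rω + 1),
      ∑ σ ∈ (Finset.Icc 1 m).pi (fun h => (Fintype.piFinset
          (fun _ : Fin h => Finset.range (r h + 1))).filter
          (fun v => ∑ i, v i ≤ r h)),
      ∑ τ ∈ (Finset.Icc 2 n).pi (fun h => (Fintype.piFinset
          (fun _ : Fin h => Finset.range (z h + 1))).filter
          (fun v => ∑ i, v i ≤ z h)),
        Nat.choose rα iα * Nat.choose rω iω * 2 ^ iω *
        (∏ h ∈ (Finset.Icc 1 m).attach,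
          2 ^ (∑ i, σ h.1 h.2 i) *
            (Nat.factorial (r h.1) /
              ((∏ i, Nat.factorial (σ h.1 h.2 i)) *
                Nat.factorial (r h.1 - ∑ i, σ h.1 h.2 i)))) *
        (∏ h ∈ (Finset.Icc 2 n).attach,
          Nat.factorial (z h.1) /
            ((∏ i, Nat.factorial (τ h.1 h.2 i)) *
              Nat.factorial (z h.1 - ∑ i, τ h.1 h.2 i))) *
        (if iα + (∑ h ∈ (Finset.Icc 1 m).attach, ∑ i : Fin h.1, (i.1 + 1) * σ h.1 h.2 i)
              + (∑ h ∈ (Finset.Icc 2 n).attach, ∑ i : Fin h.1, (i.1 + 1) * τ h.1 h.2 i)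
              ≤ zω + k then
            Nat.choose
              (zω + k - (iα
                + (∑ h ∈ (Finset.Icc 1 m).attach, ∑ i : Fin h.1, (i.1 + 1) * σ h.1 h.2 i)
                + (∑ h ∈ (Finset.Icc 2 n).attach, ∑ i : Fin h.1, (i.1 + 1) * τ h.1 h.2 i)))
              (iω + zω)
          else 0) :=
  stmt_0_general k m n rα rω zω r z t a b c d ht ha hc hdiam
end

section
/- Let k ≥ 1 and let G be a finite abelian group containing elements t_1,…,t_{r_α} with 2·t_i = 0, elements a_1,…,a_{r_2} each of order exactly 5, elements b_1,…,b_{r_ω} each of order greater than 2k+1, and elements d_1,…,d_{z_ω} each of order greater than k+1. Suppose every g ∈ G can be written as g = Σ_i ε_i·t_i + Σ_j α_j·a_j + Σ_j β_j·b_j + Σ_j δ_j·d_j with ε_i, δ_j ∈ ℕ, α_j, β_j ∈ ℤ, and Σ ε_i + Σ |α_j| + Σ |β_j| + Σ δ_j ≤ k. Then |G| ≤ Σ_{i_α=0}^{r_α} Σ_{i_ω=0}^{r_ω} Σ_{σ_1,σ_2 ≥ 0, σ_1+σ_2 ≤ r_2} C(r_α, i_α) · C(r_ω, i_ω) · 2^{i_ω}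 · 2^{σ_1+σ_2} · r_2! / ( σ_1! σ_2! (r_2 − σ_1 − σ_2)! ) · C( z_ω + k − i_α − σ_1 − 2σ_2 , i_ω + z_ω ), where C(a,b) = 0 whenever a is negative or a < b. -/
/-!
Reduce every word of length at most `k`: an involution is needed at most once, a generator of
order 5 at most twice in one direction, since `α • a = c • a` with `c ≡ α [ZMOD 5]`,
`|c| ≤ min 2 |α|`. A reduced word is then determined by its combinatorial type (which `tᵢ`
occur, which `aⱼ` occur once or twice and with which sign, which `bⱼ` occur and with which
sign) together with the remaining lengths along the signed `bⱼ` and the `dⱼ`, which form a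
vector of naturals of bounded sum on `iω + zω` coordinates; stars and bars counts these.
Summing over the types gives the bound.
-/

open Finset

theorem choose_mul_choose_eq_factorial_div {r σ₁ σ₂ : ℕ} (h : σ₁ + σ₂ ≤ r) :
    r.choose σ₁ * (r - σ₁).choose σ₂ =
      r.factorial / (σ₁.factorial * σ₂.factorial * (r - σ₁ - σ₂).factorial) := by
  refine (Nat.div_eq_of_eq_mul_left (by positivity) ?_).symm
  rw [← Nat.choose_mul_factorial_mul_factorial (show σ₁ ≤ r by omega),
    ← Nat.choose_mul_factorial_mul_factorial (show σ₂ ≤ r - σ₁ by omega), Nat.sub_sub]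
  ring

theorem card_piAntidiag_nat {ι : Type*} [DecidableEq ι] (s : Finset ι) (n : ℕ) :
    #(piAntidiag s n) = (#s).multichoose n := by
  rw [← card_finsuppAntidiag_nat_eq_multichoose, finsuppAntidiag, card_map, card_attach]

-- When `k < w + i` the range is empty and the binomial on the right vanishes as well.
theorem sum_range_sub_multichoose (w i z k : ℕ) :
    ∑ s ∈ range (k + 1 - (w + i)), (i + z).multichoose s =
      if w ≤ z + k then (z + k - w).choose (i + z) else 0 := by
  by_cases h : w + i ≤ k
  · rw [if_pos (by omega), show k + 1 - (w + i) = k - (w + i) + 1 by omega,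
      Nat.sum_range_multichoose, show k - (w + i) + (i + z) = z + k - w by omega]
  · rw [show k + 1 - (w + i) = 0 by omega, range_zero, sum_empty]
    split_ifs
    · exact (Nat.choose_eq_zero_of_lt (by omega)).symm
    · rfl

theorem card_biUnion_le_sum_of_le {ι α : Type*} [DecidableEq α] {s : Finset ι}
    {t : ι → Finset α} {f : ι → ℕ} (h : ∀ i ∈ s, #(t i) ≤ f i) :
    #(s.biUnion t) ≤ ∑ i ∈ s, f i :=
  card_biUnion_le.trans (sum_le_sum h)

section Subsets

variable {ι : Type*} [Fintype ι]

theorem sum_finset_apply_card (f : ℕ → ℕ) :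
    ∑ A : Finset ι, f #A =
      ∑ i ∈ range (Fintype.card ι + 1), (Fintype.card ι).choose i * f i := by
  rw [← powerset_univ, sum_powerset_apply_card, card_univ]
  rfl

theorem sum_signed_finset_apply_card (f : ℕ → ℕ) :
    ∑ B : Finset ι, ∑ _Q ∈ B.powerset, f #B =
      ∑ i ∈ range (Fintype.card ι + 1), (Fintype.card ι).choose i * (2 ^ i * f i) := by
  simp only [sum_const, card_powerset, smul_eq_mul]
  exact sum_finset_apply_card fun i => 2 ^ i * f i

variable [DecidableEq ι] in
theorem sum_signed_disjoint_pair_apply_card (f : ℕ → ℕ → ℕ) :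
    ∑ S₁ : Finset ι, ∑ S₂ ∈ S₁ᶜ.powerset, ∑ _P ∈ (S₁ ∪ S₂).powerset, f #S₁ #S₂ =
      ∑ σ₁ ∈ range (Fintype.card ι + 1), ∑ σ₂ ∈ range (Fintype.card ι - σ₁ + 1),
        (Fintype.card ι).factorial /
            (σ₁.factorial * σ₂.factorial * (Fintype.card ι - σ₁ - σ₂).factorial) *
          (2 ^ (σ₁ + σ₂) * f σ₁ σ₂) := by
  have inner (S₁ : Finset ι) :
      ∑ S₂ ∈ S₁ᶜ.powerset, ∑ _P ∈ (S₁ ∪ S₂).powerset, f #S₁ #S₂ =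
        ∑ σ₂ ∈ range (Fintype.card ι - #S₁ + 1),
          (Fintype.card ι - #S₁).choose σ₂ * (2 ^ (#S₁ + σ₂) * f #S₁ σ₂) := by
    rw [← card_compl]
    refine Eq.trans ?_ (sum_powerset_apply_card (fun σ₂ => 2 ^ (#S₁ + σ₂) * f #S₁ σ₂))
    refine sum_congr rfl fun S₂ hS₂ => ?_
    rw [sum_const, card_powerset, smul_eq_mul, card_union_of_disjoint
      (subset_compl_iff_disjoint_left.1 (mem_powerset.1 hS₂))]
  simp only [inner]
  rw [sum_finset_apply_card (fun σ₁ => ∑ σ₂ ∈ range (Fintype.card ι - σ₁ + 1),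
    (Fintype.card ι - σ₁).choose σ₂ * (2 ^ (σ₁ + σ₂) * f σ₁ σ₂))]
  refine sum_congr rfl fun σ₁ hσ₁ => ?_
  rw [mul_sum]
  refine sum_congr rfl fun σ₂ hσ₂ => ?_
  rw [mem_range] at hσ₁ hσ₂
  rw [← mul_assoc, choose_mul_choose_eq_factorial_div (by omega)]

end Subsets

section Coding

variable {G ι : Type*} [AddCommGroup G] [DecidableEq ι]

def signed (P : Finset ι) (x : ι → G) (j : ι) : G := if j ∈ P then x j else -x j

omit [DecidableEq ι] in
theorem zsmul_eq_natAbs_nsmul_ite (c : ℤ) (x : G) :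
    c • x = c.natAbs • (if 0 < c then x else -x) := by
  rcases lt_or_ge 0 c with h | h
  · rw [if_pos h, ← natCast_zsmul, Int.natAbs_of_nonneg h.le]
  · rw [if_neg h.not_gt, smul_neg, ← natCast_zsmul, Int.ofNat_natAbs_of_nonpos h, neg_smul, neg_neg]

omit [DecidableEq ι] in
theorem exists_zsmul_eq_of_five_nsmul_eq_zero {x : G} (hx : 5 • x = 0) (α : ℤ) :
    ∃ c : ℤ, c.natAbs ≤ 2 ∧ c.natAbs ≤ α.natAbs ∧ α • x = c • x := by
  refine ⟨(α + 2) % 5 - 2, by omega, by omega, ?_⟩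
  have hα : α = ((α + 2) % 5 - 2) + (α + 2) / 5 * 5 := by omega
  conv_lhs => rw [hα, add_zsmul, mul_zsmul, ofNat_zsmul, hx, smul_zero, add_zero]

variable [Fintype ι]

theorem sum_zsmul_eq_sum_support (c : ι → ℤ) (x : ι → G) :
    ∑ j, c j • x j = ∑ j ∈ {j | c j ≠ 0}, (c j).natAbs • signed {j | 0 < c j} x j := by
  rw [sum_filter]
  refine sum_congr rfl fun j _ => ?_
  split_ifs with h
  · rw [zsmul_eq_natAbs_nsmul_ite, signed]
    simp only [mem_filter, mem_univ, true_and]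
  · rw [not_not.1 h, zero_smul]

omit [DecidableEq ι] in
theorem exists_sum_nsmul_eq_sum_of_two_nsmul_eq_zero (t : ι → G) (ht : ∀ i, 2 • t i = 0)
    (ε : ι → ℕ) : ∃ A : Finset ι, #A ≤ ∑ i, ε i ∧ ∑ i, ε i • t i = ∑ i ∈ A, t i := by
  refine ⟨univ.filter fun i => ε i % 2 = 1, ?_, ?_⟩
  · rw [card_filter]
    exact sum_le_sum fun i _ => by split_ifs <;> omega
  · rw [sum_filter]
    refine sum_congr rfl fun i _ => ?_
    have hmod : ε i • t i = (ε i % 2) • t i := by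
      conv_lhs => rw [← Nat.div_add_mod (ε i) 2, add_nsmul, mul_nsmul, ht, smul_zero, zero_add]
    split_ifs with h
    · rw [hmod, h, one_nsmul]
    · rw [hmod, Nat.mod_two_ne_one.1 h, zero_nsmul]

theorem exists_sum_zsmul_eq_of_five_nsmul_eq_zero (a : ι → G) (ha : ∀ j, 5 • a j = 0)
    (α : ι → ℤ) : ∃ S₁ S₂ P : Finset ι, S₂ ⊆ S₁ᶜ ∧ P ⊆ S₁ ∪ S₂ ∧
      #S₁ + 2 * #S₂ ≤ ∑ j, (α j).natAbs ∧
      ∑ j, α j • a j = ∑ j ∈ S₁, signed P a j + ∑ j ∈ S₂, 2 • signed P a j := by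
  choose c hc₂ hcα hca using fun j => exists_zsmul_eq_of_five_nsmul_eq_zero (ha j) (α j)
  set S₁ : Finset ι := {j | (c j).natAbs = 1}
  set S₂ : Finset ι := {j | (c j).natAbs = 2}
  have hdisj : Disjoint S₁ S₂ := disjoint_filter.2 fun j _ h => by omega
  have hsupp : ({j | c j ≠ 0} : Finset ι) = S₁ ∪ S₂ := by
    ext j
    simp only [S₁, S₂, mem_filter, mem_union, mem_univ, true_and]
    have := hc₂ j
    omega
  refine ⟨S₁, S₂, univ.filter fun j => 0 < c j, subset_compl_iff_disjoint_left.2 hdisj, ?_, ?_, ?_⟩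
  · intro j hj
    simp only [← hsupp, mem_filter, mem_univ, true_and] at hj ⊢
    omega
  · rw [card_filter, card_filter, mul_sum, ← sum_add_distrib]
    exact sum_le_sum fun j _ => by have := hcα j; split_ifs <;> omega
  · rw [sum_congr rfl fun j _ => hca j, sum_zsmul_eq_sum_support, hsupp, sum_union hdisj]
    congr 1
    · refine sum_congr rfl fun j hj => ?_
      rw [(mem_filter.1 hj).2, one_nsmul]
    · exact sum_congr rfl fun j hj => by rw [(mem_filter.1 hj).2]

end Coding

section ReducedBall

variable {G ι₁ ι₂ ι₃ ι₄ : Type*} [AddCommGroup G] [DecidableEq G]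
  [Fintype ι₁] [Fintype ι₂] [Fintype ι₃] [Fintype ι₄]
  [DecidableEq ι₂] [DecidableEq ι₃] [DecidableEq ι₄]
  (t : ι₁ → G) (a : ι₂ → G) (b : ι₃ → G) (d : ι₄ → G)

/-- Endpoints of reduced words of length at most `k`: `A` is the set of involutions used, `S₁`
and `S₂` the order-5 generators used once and twice, `B` the generators `bⱼ` used, and `P`, `Q`
the positively oriented ones; after one step along each signed `bⱼ`, `j ∈ B`, the remaining
`n` steps are taken along these signed `bⱼ` and the `dⱼ`, with multiplicities `m`. -/
def reducedBall (k : ℕ) : Finset G :=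
  univ.biUnion fun A : Finset ι₁ =>
  univ.biUnion fun B : Finset ι₃ => B.powerset.biUnion fun Q =>
  univ.biUnion fun S₁ : Finset ι₂ => S₁ᶜ.powerset.biUnion fun S₂ =>
  (S₁ ∪ S₂).powerset.biUnion fun P =>
  (range (k + 1 - (#A + #S₁ + 2 * #S₂ + #B))).biUnion fun n =>
  (piAntidiag (B.disjSum univ) n).image fun m =>
    ∑ i ∈ A, t i + (∑ j ∈ S₁, signed P a j + ∑ j ∈ S₂, 2 • signed P a j) +
      ∑ j ∈ B, signed Q b j + ∑ i ∈ B.disjSum univ, m i • Sum.elim (signed Q b) d i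

theorem card_reducedBall_le (k : ℕ) :
    #(reducedBall t a b d k) ≤
      ∑ iα ∈ range (Fintype.card ι₁ + 1), ∑ iω ∈ range (Fintype.card ι₃ + 1),
      ∑ σ₁ ∈ range (Fintype.card ι₂ + 1), ∑ σ₂ ∈ range (Fintype.card ι₂ - σ₁ + 1),
        (Fintype.card ι₁).choose iα * (Fintype.card ι₃).choose iω * 2 ^ iω * 2 ^ (σ₁ + σ₂) *
        ((Fintype.card ι₂).factorial / (σ₁.factorial * σ₂.factorial *
          (Fintype.card ι₂ - σ₁ - σ₂).factorial)) *
        (if iα + σ₁ + 2 * σ₂ ≤ Fintype.card ι₄ + k then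
            (Fintype.card ι₄ + k - (iα + σ₁ + 2 * σ₂)).choose (iω + Fintype.card ι₄)
          else 0) := by
  set r₁ := Fintype.card ι₁
  set r₂ := Fintype.card ι₂
  set r₃ := Fintype.card ι₃
  set z := Fintype.card ι₄
  set D : ℕ → ℕ → ℕ := fun w i => if w ≤ z + k then (z + k - w).choose (i + z) else 0 with hD
  set T : ℕ → ℕ → ℕ := fun w i =>
    ∑ σ₁ ∈ range (r₂ + 1), ∑ σ₂ ∈ range (r₂ - σ₁ + 1),
      r₂.factorial / (σ₁.factorial * σ₂.factorial * (r₂ - σ₁ - σ₂).factorial) *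
        (2 ^ (σ₁ + σ₂) * D (w + σ₁ + 2 * σ₂) i) with hT
  calc #(reducedBall t a b d k)
      ≤ ∑ A : Finset ι₁, ∑ B : Finset ι₃, ∑ _Q ∈ B.powerset, ∑ S₁ : Finset ι₂,
          ∑ S₂ ∈ S₁ᶜ.powerset, ∑ _P ∈ (S₁ ∪ S₂).powerset,
          ∑ n ∈ range (k + 1 - (#A + #S₁ + 2 * #S₂ + #B)), (#B + z).multichoose n :=
        card_biUnion_le_sum_of_le fun A _ => card_biUnion_le_sum_of_le fun B _ =>
        card_biUnion_le_sum_of_le fun Q _ => card_biUnion_le_sum_of_le fun S₁ _ =>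
        card_biUnion_le_sum_of_le fun S₂ _ => card_biUnion_le_sum_of_le fun P _ =>
        card_biUnion_le_sum_of_le fun n _ => card_image_le.trans <| by
          rw [card_piAntidiag_nat, card_disjSum, card_univ]
    _ = ∑ A : Finset ι₁, ∑ B : Finset ι₃, ∑ _Q ∈ B.powerset, ∑ S₁ : Finset ι₂,
          ∑ S₂ ∈ S₁ᶜ.powerset, ∑ _P ∈ (S₁ ∪ S₂).powerset, D (#A + #S₁ + 2 * #S₂) #B := by
        simp only [sum_range_sub_multichoose, hD]
    _ = ∑ A : Finset ι₁, ∑ B : Finset ι₃, ∑ _Q ∈ B.powerset, T #A #B :=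
        sum_congr rfl fun A _ => sum_congr rfl fun B _ => sum_congr rfl fun _ _ =>
          sum_signed_disjoint_pair_apply_card fun σ₁ σ₂ => D (#A + σ₁ + 2 * σ₂) #B
    _ = ∑ A : Finset ι₁, ∑ iω ∈ range (r₃ + 1), r₃.choose iω * (2 ^ iω * T #A iω) :=
        sum_congr rfl fun A _ => sum_signed_finset_apply_card (T #A)
    _ = ∑ iα ∈ range (r₁ + 1), r₁.choose iα *
          ∑ iω ∈ range (r₃ + 1), r₃.choose iω * (2 ^ iω * T iα iω) :=
        sum_finset_apply_card fun iα => ∑ iω ∈ range (r₃ + 1), r₃.choose iω * (2 ^ iω * T iα iω)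
    _ = _ := by
        simp only [mul_sum, hT, hD]
        exact sum_congr rfl fun _ _ => sum_congr rfl fun _ _ => sum_congr rfl fun _ _ =>
          sum_congr rfl fun _ _ => by ring

theorem mem_reducedBall (ht : ∀ i, 2 • t i = 0) (ha : ∀ j, 5 • a j = 0) {k : ℕ}
    {ε : ι₁ → ℕ} {α : ι₂ → ℤ} {β : ι₃ → ℤ} {δ : ι₄ → ℕ}
    (hw : ∑ i, ε i + ∑ j, (α j).natAbs + ∑ j, (β j).natAbs + ∑ j, δ j ≤ k) :
    (∑ i, ε i • t i) + (∑ j, α j • a j) + (∑ j, β j • b j) + (∑ j, δ j • d j) ∈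
      reducedBall t a b d k := by
  obtain ⟨A, hA, htA⟩ := exists_sum_nsmul_eq_sum_of_two_nsmul_eq_zero t ht ε
  obtain ⟨S₁, S₂, P, hS₂, hP, hS, haS⟩ := exists_sum_zsmul_eq_of_five_nsmul_eq_zero a ha α
  set B : Finset ι₃ := {j | β j ≠ 0}
  set Q : Finset ι₃ := {j | 0 < β j}
  set m : ι₃ ⊕ ι₄ → ℕ := Sum.elim (fun j => (β j).natAbs - 1) δ
  have hβb : ∑ j, β j • b j = ∑ j ∈ B, signed Q b j + ∑ j ∈ B, m (.inl j) • signed Q b j := by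
    rw [sum_zsmul_eq_sum_support, ← sum_add_distrib]
    refine sum_congr rfl fun j hj => ?_
    have := (mem_filter.1 hj).2
    simp only [m, Sum.elim_inl]
    rw [← succ_nsmul', Nat.sub_add_cancel (by omega)]
  have hβw : #B + ∑ j ∈ B, m (.inl j) = ∑ j, (β j).natAbs := by
    calc #B + ∑ j ∈ B, m (.inl j) = ∑ j ∈ B, (β j).natAbs := by
          rw [card_eq_sum_ones, ← sum_add_distrib]
          refine sum_congr rfl fun j hj => ?_
          have := (mem_filter.1 hj).2
          simp only [m, Sum.elim_inl]
          omega
      _ = ∑ j, (β j).natAbs := sum_filter_of_ne fun j _ h => by simpa using h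
  simp only [reducedBall, mem_biUnion, mem_univ, true_and, mem_powerset, mem_image, mem_range,
    mem_piAntidiag]
  refine ⟨A, B, Q, ?_, S₁, S₂, hS₂, P, hP, ∑ i ∈ B.disjSum univ, m i, ?_, m, ⟨rfl, ?_⟩, ?_⟩
  · intro j hj
    simp only [B, Q, mem_filter, mem_univ, true_and] at hj ⊢
    omega
  · rw [sum_disjSum]
    simp only [m, Sum.elim_inl, Sum.elim_inr] at hβw ⊢
    omega
  · rintro (j | j) hj
    · refine inl_mem_disjSum.2 (mem_filter.2 ⟨mem_univ j, ?_⟩)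
      simp only [m, Sum.elim_inl] at hj
      omega
    · exact inr_mem_disjSum.2 (mem_univ j)
  · rw [sum_disjSum, htA, haS, hβb]
    simp only [m, Sum.elim_inl, Sum.elim_inr]
    abel

end ReducedBall

theorem stmt_1_general {G : Type*} [AddCommGroup G] [Fintype G]
    (k rα r₂ rω zω : ℕ)
    (t : Fin rα → G) (a : Fin r₂ → G) (b : Fin rω → G) (d : Fin zω → G)
    (ht : ∀ i, 2 • t i = 0)
    (ha : ∀ j, addOrderOf (a j) = 5)
    (hdiam : ∀ g : G, ∃ (ε : Fin rα → ℕ) (α : Fin r₂ → ℤ) (β : Fin rω → ℤ)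
        (δ : Fin zω → ℕ),
      g = (∑ i, ε i • t i) + (∑ j, α j • a j) + (∑ j, β j • b j) + (∑ j, δ j • d j) ∧
      (∑ i, ε i) + (∑ j, (α j).natAbs) + (∑ j, (β j).natAbs) + (∑ j, δ j) ≤ k) :
    Fintype.card G ≤
      ∑ iα ∈ Finset.range (rα + 1), ∑ iω ∈ Finset.range (rω + 1),
      ∑ σ₁ ∈ Finset.range (r₂ + 1), ∑ σ₂ ∈ Finset.range (r₂ - σ₁ + 1),
        Nat.choose rα iα * Nat.choose rω iω * 2 ^ iω * 2 ^ (σ₁ + σ₂) *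
        (Nat.factorial r₂ /
          (Nat.factorial σ₁ * Nat.factorial σ₂ * Nat.factorial (r₂ - σ₁ - σ₂))) *
        (if iα + σ₁ + 2 * σ₂ ≤ zω + k then
            Nat.choose (zω + k - (iα + σ₁ + 2 * σ₂)) (iω + zω)
          else 0) := by
  classical
  have ha5 (j : Fin r₂) : 5 • a j = 0 := ha j ▸ addOrderOf_nsmul_eq_zero (a j)
  have hcover : (univ : Finset G) ⊆ reducedBall t a b d k := fun g _ => by
    obtain ⟨ε, α, β, δ, rfl, hw⟩ := hdiam g
    exact mem_reducedBall t a b d ht ha5 hw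
  simpa only [Fintype.card_fin, card_univ] using
    (card_le_card hcover).trans (card_reducedBall_le t a b d k)

/-- **Improved Moore bound for mixed Abelian Cayley graphs with `r₂` undirected
generators of order 5.** Let `G` be a finite abelian group containing `r_α`
involutions `tᵢ`, elements `a₁,…,a_{r₂}` of order exactly `5` (taken with their
inverses), elements `b₁,…,b_{r_ω}` of order `> 2k+1` (taken with their inverses),
and elements `d₁,…,d_{z_ω}` of order `> k+1` (without their inverses). If the mixed
Cayley graph on these generators has diameter at most `k`, then
`|G| ≤ Σ_{i_α, i_ω, σ₁+σ₂ ≤ r₂} C(r_α,i_α)·C(r_ω,i_ω)·2^{i_ω}·2^{σ₁+σ₂}·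
r₂!/(σ₁!σ₂!(r₂−σ₁−σ₂)!)·C(z_ω+k−i_α−σ₁−2σ₂, i_ω+z_ω)`,
with the convention `C(a,b) = 0` for `a` negative or `a < b`. -/
theorem stmt_1 {G : Type*} [AddCommGroup G] [Fintype G]
    (k rα r₂ rω zω : ℕ) (hk : 1 ≤ k)
    (t : Fin rα → G) (a : Fin r₂ → G) (b : Fin rω → G) (d : Fin zω → G)
    (ht : ∀ i, 2 • t i = 0)
    (ha : ∀ j, addOrderOf (a j) = 5)
    (hb : ∀ j, 2 * k + 1 < addOrderOf (b j))
    (hd : ∀ j, k + 1 < addOrderOf (d j))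
    (hdiam : ∀ g : G, ∃ (ε : Fin rα → ℕ) (α : Fin r₂ → ℤ) (β : Fin rω → ℤ)
        (δ : Fin zω → ℕ),
      g = (∑ i, ε i • t i) + (∑ j, α j • a j) + (∑ j, β j • b j) + (∑ j, δ j • d j) ∧
      (∑ i, ε i) + (∑ j, (α j).natAbs) + (∑ j, (β j).natAbs) + (∑ j, δ j) ≤ k) :
    Fintype.card G ≤
      ∑ iα ∈ Finset.range (rα + 1), ∑ iω ∈ Finset.range (rω + 1),
      ∑ σ₁ ∈ Finset.range (r₂ + 1), ∑ σ₂ ∈ Finset.range (r₂ - σ₁ + 1),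
        Nat.choose rα iα * Nat.choose rω iω * 2 ^ iω * 2 ^ (σ₁ + σ₂) *
        (Nat.factorial r₂ /
          (Nat.factorial σ₁ * Nat.factorial σ₂ * Nat.factorial (r₂ - σ₁ - σ₂))) *
        (if iα + σ₁ + 2 * σ₂ ≤ zω + k then
            Nat.choose (zω + k - (iα + σ₁ + 2 * σ₂)) (iω + zω)
          else 0) :=
  stmt_1_general k rα r₂ rω zω t a b d ht ha hdiam
end

section
/- Let k ≥ 1, z ≥ 1, and let G be a finite abelian group containing an element t with 2·t = 0 and elements b_1,…,b_z such that every g ∈ G can be written as g = ε·t + Σ_{j=1}^{z} δ_j·b_j with ε, δ_1,…,δ_z ∈ ℕ and ε + Σ δ_j ≤ k. Then |G| ≤ C(z+k, z) + C(z+k−1, z), and moreover (k+z)·( C(z+k, z) + C(z+k−1, z) ) = (2k+z)·C(k+z, z). -/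
/-!
Every element of `G` is `ε • t + Σ δⱼ • bⱼ` with `ε + Σ δⱼ ≤ k`, and since `2 • t = 0` we may
take `ε ∈ {0, 1}`. So `G` is covered by the ball of radius `k` of the directed Cayley graph on
the `bⱼ` together with a translate by `t` of the ball of radius `k - 1`. A ball of radius `n` is
the image of the multisets of size `n` on `z + 1` letters (one letter for "stay put"), of which
there are `C(z + n, z)`.
-/

open Finset

section CayleyBall

variable {ι M : Type*} [Fintype ι] [AddCommMonoid M]

/-- The ball of radius `n` around `0` in the directed Cayley graph of `M` with generators `b`. -/
def cayleyBall (b : ι → M) (n : ℕ) : Set M :=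
  {g | ∃ δ : ι → ℕ, g = ∑ i, δ i • b i ∧ ∑ i, δ i ≤ n}

/-- A word of length at most `n` in the generators is padded to length exactly `n`
with the letter `none`, which stands for `0`. -/
lemma cayleyBall_subset_range_sym (b : ι → M) (n : ℕ) :
    cayleyBall b n ⊆
      Set.range fun m : Sym (Option ι) n =>
        ((m : Multiset (Option ι)).map (Option.elim' 0 b)).sum := by
  rintro g ⟨δ, rfl, hδ⟩
  refine ⟨⟨(∑ i, Multiset.replicate (δ i) (some i)) + Multiset.replicate (n - ∑ i, δ i) none,
    ?_⟩, ?_⟩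
  · simp only [Multiset.card_add, Multiset.card_sum, Multiset.card_replicate]
    omega
  · have hmap := map_sum (Multiset.mapAddMonoidHom (Option.elim' 0 b))
      (fun i => Multiset.replicate (δ i) (some i)) univ
    simp only [Multiset.coe_mapAddMonoidHom] at hmap
    simp [hmap, Multiset.sum_sum]

lemma ncard_cayleyBall_le (b : ι → M) (n : ℕ) :
    (cayleyBall b n).ncard ≤ (Fintype.card ι + n).choose (Fintype.card ι) := by
  classical
  calc (cayleyBall b n).ncard
      ≤ (Set.range fun m : Sym (Option ι) n =>
          ((m : Multiset (Option ι)).map (Option.elim' 0 b)).sum).ncard :=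
        Set.ncard_le_ncard (cayleyBall_subset_range_sym b n) (Set.finite_range _)
    _ ≤ Nat.card (Sym (Option ι) n) := by
        rw [← Set.image_univ]
        exact (Set.ncard_image_le Set.finite_univ).trans (Set.ncard_univ _).le
    _ = (Fintype.card ι + n).choose (Fintype.card ι) := by
        rw [Nat.card_eq_fintype_card, Sym.card_sym_eq_choose, Fintype.card_option,
          Nat.add_right_comm, Nat.add_sub_cancel, Nat.choose_symm_add]

/-- With `2 • t = 0`, only the parity of the number of `t`-steps matters, and an odd number
of them costs at least one step. -/
lemma nsmul_add_mem_cayleyBall_union {t : M} (ht : 2 • t = 0) (b : ι → M) {ε k : ℕ}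
    (δ : ι → ℕ) (hk : ε + ∑ i, δ i ≤ k) :
    ε • t + ∑ i, δ i • b i ∈ cayleyBall b k ∪ (t + ·) '' cayleyBall b (k - 1) := by
  rw [nsmul_eq_mod_nsmul ε ht]
  rcases Nat.mod_two_eq_zero_or_one ε with hε | hε
  · exact Or.inl ⟨δ, by rw [hε, zero_smul, zero_add], by omega⟩
  · exact Or.inr ⟨_, ⟨δ, rfl, by omega⟩, by rw [hε, one_smul]⟩

end CayleyBall

lemma add_mul_choose_add_sub_one (z k : ℕ) :
    (z + k) * (z + k - 1).choose z = k * (z + k).choose z := by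
  cases k with
  | zero => cases z <;> simp
  | succ m =>
    have h := Nat.choose_mul_succ_eq (z + m) z
    rw [show z + m + 1 - z = m + 1 by omega] at h
    rw [← Nat.add_assoc, Nat.add_sub_cancel, mul_comm, h, mul_comm]

theorem stmt_2_general {G : Type*} [AddCommGroup G] [Fintype G] (k z : ℕ)
    (hk : 1 ≤ k) (t : G) (b : Fin z → G) (ht : 2 • t = 0)
    (hdiam : ∀ g : G, ∃ (ε : ℕ) (δ : Fin z → ℕ),
      g = ε • t + ∑ j, δ j • b j ∧ ε + ∑ j, δ j ≤ k) :
    Fintype.card G ≤ Nat.choose (z + k) z + Nat.choose (z + k - 1) z ∧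
    (k + z) * (Nat.choose (z + k) z + Nat.choose (z + k - 1) z) =
      (2 * k + z) * Nat.choose (k + z) z := by
  refine ⟨?_, by rw [add_comm k z, mul_add, add_mul_choose_add_sub_one]; ring⟩
  have hcover : Set.univ ⊆ cayleyBall b k ∪ (t + ·) '' cayleyBall b (k - 1) := fun g _ => by
    obtain ⟨ε, δ, rfl, hlen⟩ := hdiam g
    exact nsmul_add_mem_cayleyBall_union ht b δ hlen
  calc Fintype.card G = (Set.univ : Set G).ncard := by
        rw [Set.ncard_univ, Nat.card_eq_fintype_card]
    _ ≤ (cayleyBall b k).ncard + ((t + ·) '' cayleyBall b (k - 1)).ncard :=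
      (Set.ncard_le_ncard hcover).trans (Set.ncard_union_le _ _)
    _ ≤ (cayleyBall b k).ncard + (cayleyBall b (k - 1)).ncard :=
      Nat.add_le_add_left (Set.ncard_image_le (Set.toFinite _)) _
    _ ≤ (z + k).choose z + (z + (k - 1)).choose z := by
      simpa only [Fintype.card_fin] using
        add_le_add (ncard_cayleyBall_le b k) (ncard_cayleyBall_le b (k - 1))
    _ = (z + k).choose z + (z + k - 1).choose z := by rw [Nat.add_sub_assoc hk]

/-- **Moore bound for mixed Abelian Cayley graphs with undirected degree 1 and
directed out-degree `z`.**
If a finite abelian group `G` has an involution `t` and elements `b₁,…,b_z` such that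
every element of `G` is a sum `ε • t + Σ δⱼ • bⱼ` with `ε + Σ δⱼ ≤ k` (i.e. the mixed
Cayley graph has diameter at most `k`), then `|G| ≤ C(z+k, z) + C(z+k−1, z)`, and
moreover `(k+z)·(C(z+k,z) + C(z+k−1,z)) = (2k+z)·C(k+z,z)`. -/
theorem stmt_2 {G : Type*} [AddCommGroup G] [Fintype G] (k z : ℕ)
    (hk : 1 ≤ k) (hz : 1 ≤ z) (t : G) (b : Fin z → G) (ht : 2 • t = 0)
    (hdiam : ∀ g : G, ∃ (ε : ℕ) (δ : Fin z → ℕ),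
      g = ε • t + ∑ j, δ j • b j ∧ ε + ∑ j, δ j ≤ k) :
    Fintype.card G ≤ Nat.choose (z + k) z + Nat.choose (z + k - 1) z ∧
    (k + z) * (Nat.choose (z + k) z + Nat.choose (z + k - 1) z) =
      (2 * k + z) * Nat.choose (k + z) z :=
  stmt_2_general k z hk t b ht hdiam
end

section
/- Let k ≥ 1 and let G be a finite abelian group containing an element t with 2·t = 0 and elements b_1, b_2 such that every g ∈ G can be written as g = ε·t + δ_1·b_1 + δ_2·b_2 with ε, δ_1, δ_2 ∈ ℕ and ε + δ_1 + δ_2 ≤ k. Then |G| ≤ (k+1)². -/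
/-- **Moore bound for mixed Abelian Cayley graphs with r = 1, z = 2.**
If a finite abelian group `G` has an involution `t` and two elements `b₁, b₂` such that
every element of `G` is a sum `ε • t + δ₁ • b₁ + δ₂ • b₂` with `ε + δ₁ + δ₂ ≤ k`
(i.e. the mixed Cayley graph has diameter at most `k`), then `|G| ≤ (k+1)²`. -/
theorem stmt_3 {G : Type*} [AddCommGroup G] [Fintype G] (k : ℕ) (hk : 1 ≤ k)
    (t b₁ b₂ : G) (ht : 2 • t = 0)
    (hdiam : ∀ g : G, ∃ ε δ₁ δ₂ : ℕ,
      g = ε • t + δ₁ • b₁ + δ₂ • b₂ ∧ ε + δ₁ + δ₂ ≤ k) :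
    Fintype.card G ≤ (k + 1) ^ 2 := by
  have key : ∀ g : G, ∃ ε δ₁ δ₂ : ℕ, ε ≤ 1 ∧ ε + δ₁ + δ₂ ≤ k ∧
      g = ε • t + δ₁ • b₁ + δ₂ • b₂ := by
    intro g
    obtain ⟨ε, δ₁, δ₂, hrep, hsum⟩ := hdiam g
    refine ⟨ε % 2, δ₁, δ₂, by omega, by omega, ?_⟩
    have h2 : ε • t = (ε % 2) • t := by
      conv_lhs => rw [← Nat.div_add_mod ε 2]
      rw [add_smul, mul_comm, mul_smul, ht, smul_zero, zero_add]
    rw [hrep, h2]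
  choose ε δ₁ δ₂ hle hsum hrep using key
  classical
  set f : G → ℕ × ℕ := fun g =>
    if ε g = 0 then (δ₁ g, δ₂ g) else (k - δ₁ g, k - δ₂ g) with hf
  have hmaps : ∀ g ∈ (Finset.univ : Finset G),
      f g ∈ Finset.range (k + 1) ×ˢ Finset.range (k + 1) := by
    intro g _
    have h1 := hle g; have h2 := hsum g
    simp only [hf, Finset.mem_product, Finset.mem_range]
    split <;> constructor <;> omega
  have hinj : Set.InjOn f (Finset.univ : Finset G) := by
    intro a _ b _ hab
    have hsa := hsum a; have hsb := hsum b
    have hla := hle a; have hlb := hle b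
    simp only [hf] at hab
    by_cases ha : ε a = 0 <;> by_cases hb : ε b = 0 <;>
      simp only [ha, hb, if_true, if_false, if_pos, if_neg, Prod.mk.injEq] at hab
    · rw [hrep a, hrep b, ha, hb, hab.1, hab.2]
    · exfalso; omega
    · exfalso; omega
    · have e1 : ε a = ε b := by omega
      have e2 : δ₁ a = δ₁ b := by omega
      have e3 : δ₂ a = δ₂ b := by omega
      rw [hrep a, hrep b, e1, e2, e3]
  calc Fintype.card G
      ≤ (Finset.range (k + 1) ×ˢ Finset.range (k + 1)).card :=
        Finset.card_le_card_of_injOn f hmaps hinj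
    _ = (k + 1) ^ 2 := by simp [sq]
end

section
/- Let G be a finite abelian group containing an element t with 2·t = 0 and elements b_1, b_2 with 4·b_1 = 4·b_2 = 0, such that every g ∈ G can be written as g = ε·t + δ_1·b_1 + δ_2·b_2 with ε, δ_1, δ_2 ∈ ℕ and ε + δ_1 + δ_2 ≤ 7. Then |G| ≤ 34. In particular, no mixed Abelian Cayley graph with undirected degree 1, directed out-degree 2, and diameter 7 on a group of order 64 can have both directed generators of order at most 4. -/
private lemma mod_smul {G : Type*} [AddCommGroup G] (x : G) (m n : ℕ)
    (h : m • x = 0) : n • x = (n % m) • x := by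
  conv_lhs => rw [← Nat.div_add_mod n m]
  rw [add_smul, mul_comm, mul_smul, h, smul_zero, zero_add]

/-- **Improved Moore bound rules out directed generators of order ≤ 4 for
(r, z, k) = (1, 2, 7) on groups of order 64.**
If a finite abelian group `G` has an involution `t` and two elements `b₁, b₂` with
`4 • b₁ = 4 • b₂ = 0`, such that every element of `G` is a sum
`ε • t + δ₁ • b₁ + δ₂ • b₂` with `ε + δ₁ + δ₂ ≤ 7` (i.e. the mixed Cayley graph has
diameter at most `7`), then `|G| ≤ 34`; in particular `|G|` cannot be `64`. -/
theorem stmt_4 {G : Type*} [AddCommGroup G] [Fintype G]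
    (t b₁ b₂ : G) (ht : 2 • t = 0) (hb₁ : 4 • b₁ = 0) (hb₂ : 4 • b₂ = 0)
    (hdiam : ∀ g : G, ∃ ε δ₁ δ₂ : ℕ,
      g = ε • t + δ₁ • b₁ + δ₂ • b₂ ∧ ε + δ₁ + δ₂ ≤ 7) :
    Fintype.card G ≤ 34 := by
  have hsurj : Function.Surjective
      (fun p : Fin 2 × Fin 4 × Fin 4 => (p.1 : ℕ) • t + (p.2.1 : ℕ) • b₁ + (p.2.2 : ℕ) • b₂) := by
    intro g
    obtain ⟨ε, δ₁, δ₂, hg, -⟩ := hdiam g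
    refine ⟨⟨⟨ε % 2, Nat.mod_lt _ (by norm_num)⟩,
      ⟨δ₁ % 4, Nat.mod_lt _ (by norm_num)⟩, ⟨δ₂ % 4, Nat.mod_lt _ (by norm_num)⟩⟩, ?_⟩
    simp only
    rw [hg, mod_smul t 2 ε ht, mod_smul b₁ 4 δ₁ hb₁, mod_smul b₂ 4 δ₂ hb₂]
  calc Fintype.card G ≤ Fintype.card (Fin 2 × Fin 4 × Fin 4) :=
        Fintype.card_le_of_surjective _ hsurj
    _ ≤ 34 := by simp
end

section
/- For natural numbers r_1, r_2, z, k, define M_AC(r_1, r_2, z, k) = Σ_{i=0}^{r_2} C(r_2, i)·2^i · Σ_{j=0}^{r_1} C(r_1, j) · C(k+z−j, i+z), where C(a,b) denotes the binomial coefficient with C(a,b) = 0 when a < b. If ν is a natural number with ν ≤ r_1, ν ≤ z, and r_1 ≤ k, then M_AC(r_1, r_2, z, k) = M_AC(r_1 − ν, r_2 + ν, z − ν, k). -/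
open Finset

/-- The Moore bound `M_AC(r₁, r₂, z, k)` for mixed Abelian Cayley graphs with `r₁`
involutions, `r₂` generators taken together with their inverses, `z` directed
generators, and diameter `k`. -/
def M_AC (r₁ r₂ z k : ℕ) : ℕ :=
  ∑ i ∈ Finset.range (r₂ + 1), Nat.choose r₂ i * 2 ^ i *
    ∑ j ∈ Finset.range (r₁ + 1), Nat.choose r₁ j * Nat.choose (k + z - j) (i + z)

/-- Inner sum. -/
def Tsum (k s t m : ℕ) : ℕ :=
  ∑ j ∈ Finset.range (s + 1), Nat.choose s j * Nat.choose (k + t - j) (m + t)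

lemma M_AC_eq (r₁ r₂ z k : ℕ) :
    M_AC r₁ r₂ z k = ∑ i ∈ Finset.range (r₂ + 1),
      Nat.choose r₂ i * 2 ^ i * Tsum k r₁ z i := rfl

lemma Tsum_succ (k s t m : ℕ) (hs : s ≤ k) :
    Tsum k (s + 1) (t + 1) m = Tsum k s t m + 2 * Tsum k s t (m + 1) := by
  have hU : ∑ j ∈ Finset.range (s + 1),
      Nat.choose s (j + 1) * Nat.choose (k + t - j) (m + t + 1)
      + Nat.choose (k + t + 1) (m + t + 1)
      = ∑ j ∈ Finset.range (s + 1),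
        Nat.choose s j * Nat.choose (k + t + 1 - j) (m + t + 1) := by
    have h2 : ∑ j ∈ Finset.range (s + 2),
        Nat.choose s j * Nat.choose (k + t + 1 - j) (m + t + 1)
        = ∑ j ∈ Finset.range (s + 1),
          Nat.choose s j * Nat.choose (k + t + 1 - j) (m + t + 1) := by
      rw [Finset.sum_range_succ, Nat.choose_succ_self, zero_mul, add_zero]
    have h3 : ∑ j ∈ Finset.range (s + 2),
        Nat.choose s j * Nat.choose (k + t + 1 - j) (m + t + 1)
        = ∑ j ∈ Finset.range (s + 1),
            Nat.choose s (j + 1) * Nat.choose (k + t - j) (m + t + 1)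
          + Nat.choose (k + t + 1) (m + t + 1) := by
      rw [Finset.sum_range_succ']
      simp only [Nat.succ_sub_succ, Nat.choose_zero_right, one_mul, Nat.sub_zero]
    rw [← h2, h3]
  have hPas : ∀ j ∈ Finset.range (s + 1),
      Nat.choose s j * Nat.choose (k + t + 1 - j) (m + t + 1)
      = Nat.choose s j * Nat.choose (k + t - j) (m + t)
        + Nat.choose s j * Nat.choose (k + t - j) (m + t + 1) := by
    intro j hj
    rw [Finset.mem_range] at hj
    have h1 : k + t + 1 - j = (k + t - j) + 1 := by omega
    rw [h1, Nat.choose_succ_succ' (k + t - j) (m + t)]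
    · ring_nf
    -- choose (n+1) (m+t+1) = choose n (m+t) + choose n (m+t+1)
  -- expand LHS
  show ∑ j ∈ Finset.range (s + 2),
      Nat.choose (s + 1) j * Nat.choose (k + (t + 1) - j) (m + (t + 1))
      = Tsum k s t m + 2 * Tsum k s t (m + 1)
  rw [Finset.sum_range_succ']
  have hterm : ∀ j, Nat.choose (s + 1) (j + 1) * Nat.choose (k + (t + 1) - (j + 1)) (m + (t + 1))
      = Nat.choose s j * Nat.choose (k + t - j) (m + t + 1)
        + Nat.choose s (j + 1) * Nat.choose (k + t - j) (m + t + 1) := by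
    intro j
    have h1 : k + (t + 1) - (j + 1) = k + t - j := by omega
    have h2 : m + (t + 1) = m + t + 1 := by omega
    rw [h1, h2, Nat.choose_succ_succ, add_mul]
  simp only [hterm]
  rw [Finset.sum_add_distrib]
  have h0 : Nat.choose (s + 1) 0 * Nat.choose (k + (t + 1) - 0) (m + (t + 1))
      = Nat.choose (k + t + 1) (m + t + 1) := by
    simp [Nat.add_assoc]
  rw [add_assoc, h0, hU, Finset.sum_congr rfl hPas, Finset.sum_add_distrib]
  have hT1 : Tsum k s t (m + 1) = ∑ j ∈ Finset.range (s + 1),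
      Nat.choose s j * Nat.choose (k + t - j) (m + t + 1) := by
    unfold Tsum
    apply Finset.sum_congr rfl
    intro j _
    have h : m + 1 + t = m + t + 1 := by omega
    rw [h]
  rw [hT1]
  unfold Tsum
  ring

lemma M_AC_step (s r₂ t k : ℕ) (hs : s ≤ k) :
    M_AC (s + 1) r₂ (t + 1) k = M_AC s (r₂ + 1) t k := by
  rw [M_AC_eq, M_AC_eq]
  -- RHS manipulation
  have hdrop : ∑ i ∈ Finset.range (r₂ + 2),
      Nat.choose r₂ i * 2 ^ i * Tsum k s t i
      = ∑ i ∈ Finset.range (r₂ + 1),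
        Nat.choose r₂ i * 2 ^ i * Tsum k s t i := by
    rw [Finset.sum_range_succ, Nat.choose_succ_self, zero_mul, zero_mul, add_zero]
  have hRHS : ∑ i ∈ Finset.range (r₂ + 1 + 1),
      Nat.choose (r₂ + 1) i * 2 ^ i * Tsum k s t i
      = ∑ i ∈ Finset.range (r₂ + 1),
          Nat.choose r₂ i * (2 * 2 ^ i) * Tsum k s t (i + 1)
        + ∑ i ∈ Finset.range (r₂ + 1),
          Nat.choose r₂ i * 2 ^ i * Tsum k s t i := by
    rw [Finset.sum_range_succ']
    have hterm : ∀ i, Nat.choose (r₂ + 1) (i + 1) * 2 ^ (i + 1) * Tsum k s t (i + 1)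
        = Nat.choose r₂ i * (2 * 2 ^ i) * Tsum k s t (i + 1)
          + Nat.choose r₂ (i + 1) * 2 ^ (i + 1) * Tsum k s t (i + 1) := by
      intro i
      rw [Nat.choose_succ_succ, add_mul, add_mul, pow_succ]
      ring
    simp only [hterm]
    rw [Finset.sum_add_distrib, add_assoc]
    congr 1
    have : Nat.choose (r₂ + 1) 0 * 2 ^ 0 * Tsum k s t 0
        = Nat.choose r₂ 0 * 2 ^ 0 * Tsum k s t 0 := by simp
    rw [this, ← Finset.sum_range_succ' (fun i => Nat.choose r₂ i * 2 ^ i * Tsum k s t i), hdrop]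
  rw [hRHS]
  have hterm : ∀ i, Nat.choose r₂ i * 2 ^ i * Tsum k (s + 1) (t + 1) i
      = Nat.choose r₂ i * 2 ^ i * Tsum k s t i
        + Nat.choose r₂ i * (2 * 2 ^ i) * Tsum k s t (i + 1) := by
    intro i
    rw [Tsum_succ k s t i hs]
    ring
  simp only [hterm]
  rw [Finset.sum_add_distrib]
  ring

/-- **Symmetry of the Moore bound for mixed Abelian Cayley graphs** (Dalfó, Fiol,
López): for any `ν` with `ν ≤ r₁`, `ν ≤ z` (and `r₁ ≤ k`),
`M_AC(r₁, r₂, z, k) = M_AC(r₁ − ν, r₂ + ν, z − ν, k)`. -/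
theorem stmt_5 (r₁ r₂ z k ν : ℕ) (hν₁ : ν ≤ r₁) (hνz : ν ≤ z) (hr₁k : r₁ ≤ k) :
    M_AC r₁ r₂ z k = M_AC (r₁ - ν) (r₂ + ν) (z - ν) k := by
  induction ν generalizing r₁ r₂ z with
  | zero => simp
  | succ n ih =>
    obtain ⟨s, rfl⟩ : ∃ s, r₁ = s + 1 := ⟨r₁ - 1, by omega⟩
    obtain ⟨t, rfl⟩ : ∃ t, z = t + 1 := ⟨z - 1, by omega⟩
    rw [M_AC_step s r₂ t k (by omega), ih s (r₂ + 1) t (by omega) (by omega) (by omega)]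
    congr 1 <;> omega
end

section
/- For all natural numbers r_α, r_ω, z_ω, k with r_α ≤ k, the following identity holds: Σ_{i=0}^{k} C(r_ω + z_ω + i, i) · C(r_α + r_ω, k − i) = Σ_{i=0}^{r_ω} C(r_ω, i) · 2^i · Σ_{j=0}^{r_α} C(r_α, j) · C(k + z_ω − j, i + z_ω), where C(a,b) denotes the binomial coefficient with C(a,b) = 0 when a < b. -/
/-!
Both sides are the coefficient of `X ^ k` in `(1 + X) ^ (rα + rω) / (1 - X) ^ (rω + zω + 1)`.
For the left side this is the Cauchy product of the two factors. For the right side write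
`1 + X = 2X + (1 - X)`, so that the binomial theorem gives
`(1 + X) ^ rω / (1 - X) ^ (rω + zω + 1) = ∑ i, C(rω, i) (2X) ^ i / (1 - X) ^ (i + zω + 1)`,
whose `m`-th coefficient is `∑ i, C(rω, i) 2 ^ i C(m + zω, i + zω)`; multiplying by `(1 + X) ^ rα`
shifts `m` to `k - j`, which is `k + zω - j` without truncation because `j ≤ rα ≤ k`.
-/

open Finset PowerSeries

namespace PowerSeries

variable {S : Type*} [CommRing S]

theorem coeff_one_add_X_pow (n m : ℕ) : coeff m ((1 + X : S⟦X⟧) ^ n) = n.choose m := by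
  have : ((1 + X : S⟦X⟧) ^ n) = (((1 + Polynomial.X) ^ n : Polynomial S) : S⟦X⟧) := by
    push_cast; rfl
  rw [this, Polynomial.coeff_coe, Polynomial.coeff_one_add_X_pow]

theorem coeff_invOneSubPow_succ (d n : ℕ) :
    coeff n (invOneSubPow S (d + 1)).val = (d + n).choose d := by
  rw [invOneSubPow_val_succ_eq_mk_add_choose, coeff_mk]

theorem coeff_X_pow_mul_invOneSubPow (i z m : ℕ) :
    coeff m ((X : S⟦X⟧) ^ i * (invOneSubPow S (i + z + 1)).val) = (m + z).choose (i + z) := by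
  rw [coeff_X_pow_mul']
  split_ifs with h
  · rw [coeff_invOneSubPow_succ, show i + z + (m - i) = m + z by omega]
  · rw [Nat.choose_eq_zero_of_lt (by omega), Nat.cast_zero]

theorem one_add_X_pow_mul_invOneSubPow (r z : ℕ) :
    (1 + X : S⟦X⟧) ^ r * (invOneSubPow S (r + z + 1)).val =
      ∑ i ∈ range (r + 1), (r.choose i * 2 ^ i) • (X ^ i * (invOneSubPow S (i + z + 1)).val) := by
  have hsplit : (1 + X : S⟦X⟧) = 2 * X + (1 - X) := by ring
  rw [hsplit, add_pow, sum_mul]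
  refine sum_congr rfl fun i hi => ?_
  have hi : i ≤ r := Nat.lt_succ_iff.mp (mem_range.mp hi)
  have hG := one_sub_pow_mul_invOneSubPow_val_add_eq_invOneSubPow_val S (i + z + 1) (r - i)
  rw [show i + z + 1 + (r - i) = r + z + 1 by omega] at hG
  rw [← hG, mul_pow, nsmul_eq_mul]
  push_cast
  ring

theorem coeff_one_add_X_pow_mul_invOneSubPow (r z m : ℕ) :
    coeff m ((1 + X : S⟦X⟧) ^ r * (invOneSubPow S (r + z + 1)).val) =
      ((∑ i ∈ range (r + 1), r.choose i * 2 ^ i * (m + z).choose (i + z) : ℕ) : S) := by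
  simp only [one_add_X_pow_mul_invOneSubPow, map_sum, map_nsmul, coeff_X_pow_mul_invOneSubPow]
  push_cast
  simp [nsmul_eq_mul, mul_assoc]

theorem coeff_one_add_X_pow_mul {a k : ℕ} (hak : a ≤ k) (F : S⟦X⟧) :
    coeff k ((1 + X) ^ a * F) = ∑ j ∈ range (a + 1), (a.choose j : S) * coeff (k - j) F := by
  rw [add_comm, add_pow, sum_mul, map_sum]
  refine sum_congr rfl fun j hj => ?_
  have hj : j ≤ k := by have := mem_range.mp hj; omega
  rw [one_pow, mul_one, mul_comm (X ^ j), mul_assoc, ← map_natCast (C (R := S)), coeff_C_mul,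
    coeff_X_pow_mul', if_pos hj]

end PowerSeries

/-- **Two expressions for the Moore bound of mixed Abelian Cayley graphs coincide.**
The generating-function form of López, Pérez-Rosés, and Pujolàs (left-hand side) equals
the combinatorial form of Dalfó, Fiol, and López (right-hand side), for `r_α ≤ k`. -/
theorem stmt_6 (rα rω zω k : ℕ) (hrα : rα ≤ k) :
    ∑ i ∈ Finset.range (k + 1),
        Nat.choose (rω + zω + i) i * Nat.choose (rα + rω) (k - i) =
    ∑ i ∈ Finset.range (rω + 1), Nat.choose rω i * 2 ^ i *
        ∑ j ∈ Finset.range (rα + 1),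
          Nat.choose rα j * Nat.choose (k + zω - j) (i + zω) := by
  set G := (invOneSubPow ℤ (rω + zω + 1)).val
  have hLHS : coeff k (G * (1 + X) ^ (rα + rω)) =
      ((∑ i ∈ range (k + 1), (rω + zω + i).choose i * (rα + rω).choose (k - i) : ℕ) : ℤ) := by
    rw [coeff_mul, Nat.sum_antidiagonal_eq_sum_range_succ_mk]
    push_cast
    simp only [G, coeff_invOneSubPow_succ, coeff_one_add_X_pow, Nat.choose_symm_add]
  have hRHS : coeff k ((1 + X) ^ rα * ((1 + X) ^ rω * G)) =
      ((∑ i ∈ range (rω + 1), rω.choose i * 2 ^ i *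
        ∑ j ∈ range (rα + 1), rα.choose j * (k + zω - j).choose (i + zω) : ℕ) : ℤ) := by
    rw [coeff_one_add_X_pow_mul hrα]
    simp only [G, coeff_one_add_X_pow_mul_invOneSubPow]
    push_cast
    simp only [mul_sum]
    rw [sum_comm]
    refine sum_congr rfl fun i _ => sum_congr rfl fun j hj => ?_
    rw [Nat.sub_add_comm (by have := mem_range.mp hj; omega)]
    ring
  rw [← Nat.cast_inj (R := ℤ), ← hLHS, ← hRHS]
  congr 1
  ring
end

section
/- Let k ≥ 2 and let N = 4k². In the cyclic group ℤ/Nℤ, every element n can be written as n = α·1 + β·(2k−1) + γ·(2k²) with α, β ∈ ℤ, γ ∈ ℕ, and |α| + |β| + γ ≤ k. In other words, the mixed circulant graph Circ(4k²; ±1, ±(2k−1), 2k²) with one involution 2k² has diameter at most k. -/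
lemma aux7 (k : ℕ) (hk : 2 ≤ k) (n : ZMod (4 * k ^ 2)) (α β : ℤ) (γ : ℕ)
    (h : α + β * (2 * (k : ℤ) - 1) + (γ : ℤ) * (2 * (k : ℤ) ^ 2)
          ≡ (n.val : ℤ) [ZMOD (4 * k ^ 2 : ℕ)]) :
    n = α • (1 : ZMod (4 * k ^ 2)) + β • ((2 * k - 1 : ℕ) : ZMod (4 * k ^ 2))
          + γ • ((2 * k ^ 2 : ℕ) : ZMod (4 * k ^ 2)) := by
  haveI : NeZero (4 * k ^ 2) := ⟨by positivity⟩
  have h2 := (ZMod.intCast_eq_intCast_iff _ _ _).mpr h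
  have hn : (((n.val : ℤ)) : ZMod (4 * k ^ 2)) = n := by
    push_cast
    simp [ZMod.natCast_val, ZMod.cast_id]
  rw [← hn, ← h2]
  push_cast [Nat.cast_sub (show 1 ≤ 2 * k by omega)]
  simp [zsmul_eq_mul, nsmul_eq_mul]

/-- **`Circ(4k²; ±1, ±(2k−1), 2k²)` has diameter at most `k`.**
For `k ≥ 2`, every element of `ℤ/4k²ℤ` is a sum `α·1 + β·(2k−1) + γ·(2k²)` with
`α, β ∈ ℤ`, `γ ∈ ℕ` and `|α| + |β| + γ ≤ k`. This is the existence part of the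
proposition that the maximum order of a mixed Abelian Cayley graph with
`(r_α, r_ω, z_ω) = (1, 2, 0)` and diameter `k` is `4k²`. -/
theorem stmt_7 (k : ℕ) (hk : 2 ≤ k) :
    ∀ n : ZMod (4 * k ^ 2), ∃ (α β : ℤ) (γ : ℕ),
      n = α • (1 : ZMod (4 * k ^ 2)) + β • ((2 * k - 1 : ℕ) : ZMod (4 * k ^ 2))
            + γ • ((2 * k ^ 2 : ℕ) : ZMod (4 * k ^ 2)) ∧
      α.natAbs + β.natAbs + γ ≤ k := by
  intro n
  haveI : NeZero (4 * k ^ 2) := ⟨by positivity⟩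
  obtain ⟨a, b, hab, ha1, ha2, hb1, hb2⟩ : ∃ a b : ℤ,
      a + 2 * k * b = (n.val : ℤ) ∧ -(k : ℤ) < a ∧ a ≤ k ∧ 0 ≤ b ∧ b ≤ 2 * k := by
    have hv : n.val < 4 * k ^ 2 := n.val_lt
    have h2k : 0 < 2 * k := by omega
    have hm : 2 * k * (n.val / (2 * k)) + n.val % (2 * k) = n.val := Nat.div_add_mod _ _
    have hr : n.val % (2 * k) < 2 * k := Nat.mod_lt _ h2k
    have hq : n.val / (2 * k) < 2 * k := by
      apply Nat.div_lt_of_lt_mul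
      nlinarith
    have hm' : (2 * (k : ℤ)) * ((n.val / (2 * k) : ℕ) : ℤ) + ((n.val % (2 * k) : ℕ) : ℤ)
        = (n.val : ℤ) := by exact_mod_cast hm
    by_cases hc : n.val % (2 * k) ≤ k
    · refine ⟨((n.val % (2 * k) : ℕ) : ℤ), ((n.val / (2 * k) : ℕ) : ℤ), by linarith, ?_, ?_, ?_, ?_⟩
      · have : (0:ℤ) ≤ ((n.val % (2 * k) : ℕ) : ℤ) := Int.natCast_nonneg _
        have : (0:ℤ) < (k:ℤ) := by exact_mod_cast (by omega : 0 < k)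
        linarith
      · exact_mod_cast hc
      · exact Int.natCast_nonneg _
      · exact_mod_cast hq.le
    · refine ⟨((n.val % (2 * k) : ℕ) : ℤ) - 2 * k, ((n.val / (2 * k) : ℕ) : ℤ) + 1, by linarith,
        ?_, ?_, ?_, ?_⟩
      · have : (k:ℤ) < ((n.val % (2 * k) : ℕ) : ℤ) := by exact_mod_cast (by omega : k < n.val % (2*k))
        linarith
      · have : ((n.val % (2 * k) : ℕ) : ℤ) < 2 * k := by exact_mod_cast hr
        have : (0:ℤ) < (k:ℤ) := by exact_mod_cast (by omega : 0 < k)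
        linarith
      · have : (0:ℤ) ≤ ((n.val / (2 * k) : ℕ) : ℤ) := Int.natCast_nonneg _
        linarith
      · have : ((n.val / (2 * k) : ℕ) : ℤ) < 2 * k := by exact_mod_cast hq
        linarith
  have hopt : ((a + b).natAbs + b.natAbs ≤ k)
      ∨ ((a + b - k).natAbs + (b - k).natAbs + 1 ≤ k)
      ∨ ((a + b - 2 * k).natAbs + (b - 2 * k).natAbs ≤ k)
      ∨ ((a + b + 1 - 2 * k).natAbs + (b + 1).natAbs ≤ k)
      ∨ ((a + b + 1 - 3 * k).natAbs + (b + 1 - k).natAbs + 1 ≤ k)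
      ∨ ((a + b + 1 - 4 * k).natAbs + (b + 1 - 2 * k).natAbs ≤ k) := by omega
  rcases hopt with h1 | h2 | h3 | h4 | h5 | h6
  · refine ⟨a + b, b, 0, aux7 k hk n _ _ _ ?_, by omega⟩
    have : (a + b) + b * (2 * (k:ℤ) - 1) + ((0:ℕ):ℤ) * (2 * (k:ℤ) ^ 2) = (n.val : ℤ) := by
      push_cast; linarith
    rw [this]
  · refine ⟨a + b - k, b - k, 1, aux7 k hk n _ _ _ ?_, by omega⟩
    have : (a + b - k) + (b - k) * (2 * (k:ℤ) - 1) + ((1:ℕ):ℤ) * (2 * (k:ℤ) ^ 2) = (n.val : ℤ) := by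
      push_cast; nlinarith [hab]
    rw [this]
  · refine ⟨a + b - 2 * k, b - 2 * k, 0, aux7 k hk n _ _ _ ?_, by omega⟩
    refine Int.ModEq.symm (Int.modEq_iff_dvd.mpr ⟨-1, ?_⟩)
    push_cast; nlinarith [hab]
  · refine ⟨a + b + 1 - 2 * k, b + 1, 0, aux7 k hk n _ _ _ ?_, by omega⟩
    have : (a + b + 1 - 2 * k) + (b + 1) * (2 * (k:ℤ) - 1) + ((0:ℕ):ℤ) * (2 * (k:ℤ) ^ 2)
        = (n.val : ℤ) := by push_cast; nlinarith [hab]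
    rw [this]
  · refine ⟨a + b + 1 - 3 * k, b + 1 - k, 1, aux7 k hk n _ _ _ ?_, by omega⟩
    have : (a + b + 1 - 3 * k) + (b + 1 - k) * (2 * (k:ℤ) - 1) + ((1:ℕ):ℤ) * (2 * (k:ℤ) ^ 2)
        = (n.val : ℤ) := by push_cast; nlinarith [hab]
    rw [this]
  · refine ⟨a + b + 1 - 4 * k, b + 1 - 2 * k, 0, aux7 k hk n _ _ _ ?_, by omega⟩
    refine Int.ModEq.symm (Int.modEq_iff_dvd.mpr ⟨-1, ?_⟩)
    push_cast; nlinarith [hab]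
end

section
/- Let k ≥ 2 and let G be a finite abelian group containing elements a, b and an element t with t ≠ 0 and 2·t = 0, such that every g ∈ G can be written as g = α·a + β·b + γ·t with α, β ∈ ℤ, γ ∈ ℕ, and |α| + |β| + γ ≤ k. Then |G| ≤ 4k². -/
/-!
Write `F (p, γ) = p.1 • a + p.2 • b + γ • t`. As `t` has order 2, `G` is covered by `F` on
`B k × {0}` and `B (k - 1) × {1}`, where `B r` is the ℓ¹-ball of radius `r` in `ℤ²`; these have
`4k² + 2` points in total. Since `|G|` is even, `|G| > 4k²` forces `|G| = 4k² + 2` and `F` is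
injective there. Injectivity says that a nonzero `z` with `F (z, 0) = 0` has `‖z‖₁ ≥ 2k + 1` and
that `F (z, 0) = t` implies `‖z‖₁ ≥ 2k`. So the lattice `Λ = {z | F (z, 0) ∈ {0, t}}`, of index
`|G| / 2 = 2k² + 1`, has minimal ℓ¹-norm `2k`, attained only at vectors mapped to `t`.
Pigeonhole in `B k` yields two such vectors `u ≠ ±v`; then `u ± v` are mapped to `0`, so
`‖u ± v‖₁ ≥ 2k + 1`, which forces `2k² + 2 ≤ |det (u, v)| ≤ 4k²`. But `|det (u, v)|` is the
index of `ℤu + ℤv ≤ Λ`, a multiple of `2k² + 1`: a contradiction.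
-/

open Finset

def l1norm (p : ℤ × ℤ) : ℕ := p.1.natAbs + p.2.natAbs

noncomputable def l1Ball (r : ℕ) : Finset (ℤ × ℤ) :=
  (Icc (-r : ℤ) r ×ˢ Icc (-r : ℤ) r).filter (l1norm · ≤ r)

lemma mem_l1Ball {r : ℕ} {p : ℤ × ℤ} : p ∈ l1Ball r ↔ l1norm p ≤ r := by
  unfold l1Ball
  rw [mem_filter, mem_product, mem_Icc, mem_Icc]
  unfold l1norm
  omega

lemma card_l1Ball_filter_parity (r c : ℕ) (hc : c ≤ 1) :
    #((l1Ball r).filter fun p => (p.1 + p.2 + r + c : ℤ) % 2 = 0) = (r + 1 - c) ^ 2 := by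
  have hbox : #(Icc (c : ℤ) r ×ˢ Icc (c : ℤ) r) = (r + 1 - c) ^ 2 := by
    rw [card_product, Int.card_Icc, sq]; congr <;> omega
  rw [← hbox]
  refine card_bij' (fun p _ => ((p.1 + p.2 + r + c) / 2, (p.1 - p.2 + r + c) / 2))
    (fun q _ => (q.1 + q.2 - r - c, q.1 - q.2)) ?_ ?_ ?_ ?_ <;>
    simp only [mem_filter, mem_l1Ball, l1norm, mem_product, mem_Icc, Prod.ext_iff] <;>
    omega

lemma card_l1Ball (r : ℕ) : #(l1Ball r) = 2 * r ^ 2 + 2 * r + 1 := by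
  have hodd : ∀ p ∈ l1Ball r, ¬(p.1 + p.2 + r + (0 : ℕ) : ℤ) % 2 = 0 ↔
      (p.1 + p.2 + r + (1 : ℕ) : ℤ) % 2 = 0 := fun p _ => by omega
  rw [← card_filter_add_card_filter_not fun p : ℤ × ℤ => (p.1 + p.2 + r + (0 : ℕ) : ℤ) % 2 = 0,
    filter_congr hodd, card_l1Ball_filter_parity r 0 (Nat.zero_le 1),
    card_l1Ball_filter_parity r 1 le_rfl, Nat.sub_zero, Nat.add_sub_cancel]
  ring

lemma l1norm_sub_le_of_mem_l1Ball {r : ℕ} {p q : ℤ × ℤ} (hp : p ∈ l1Ball r)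
    (hq : q ∈ l1Ball r) : l1norm (q - p) ≤ 2 * r := by
  rw [mem_l1Ball, l1norm] at hp hq
  simp only [l1norm, Prod.fst_sub, Prod.snd_sub]
  omega

lemma card_filter_add_mem_l1Ball_le {k : ℕ} {u : ℤ × ℤ} (hu : l1norm u = 2 * k) :
    #((l1Ball k).filter (· + u ∈ l1Ball k)) ≤ k + 1 := by
  unfold l1norm at hu
  -- `p` lies on a shortest path from `0` to `-u`, so it is determined by `p.1`
  calc #((l1Ball k).filter (· + u ∈ l1Ball k))
      ≤ #(Icc (max (max (-k : ℤ) (-k - u.1)) (min 0 (-u.1)))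
          (min (min (k : ℤ) (k - u.1)) (max 0 (-u.1)))) := by
        refine card_le_card_of_injOn Prod.fst (fun p hp => ?_) (fun p hp q hq hpq => ?_)
        · simp only [coe_filter, mem_l1Ball, l1norm, Prod.fst_add, Prod.snd_add,
            Set.mem_ofPred_eq] at hp
          simp only [coe_Icc, Set.mem_Icc]
          omega
        · simp only [coe_filter, mem_l1Ball, l1norm, Prod.fst_add, Prod.snd_add,
            Set.mem_ofPred_eq] at hp hq
          exact Prod.ext hpq (by omega)
    _ ≤ k + 1 := by rw [Int.card_Icc]; omega

lemma exists_l1norm_le_l1norm_add_le {r₁ r₂ : ℕ} {z : ℤ × ℤ} (hz : l1norm z ≤ r₁ + r₂) :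
    ∃ x, l1norm x ≤ r₁ ∧ l1norm (x + z) ≤ r₂ := by
  -- `x` moves `z` a total distance `d` towards the origin, first along the first coordinate
  obtain ⟨d, hd⟩ : ∃ d : ℤ, d = max 0 ((l1norm z : ℤ) - r₂) := ⟨_, rfl⟩
  obtain ⟨s, hs⟩ : ∃ s : ℤ, s = min d z.1.natAbs := ⟨_, rfl⟩
  refine ⟨(-max (-s) (min z.1 s), -max (s - d) (min z.2 (d - s))), ?_, ?_⟩ <;>
    simp only [l1norm, Prod.fst_add, Prod.snd_add] at * <;> omega

def supNorm (p : ℤ × ℤ) : ℕ := max p.1.natAbs p.2.natAbs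

@[simp] lemma supNorm_neg (p : ℤ × ℤ) : supNorm (-p) = supNorm p := by simp [supNorm]

@[simp] lemma supNorm_swap (p : ℤ × ℤ) : supNorm p.swap = supNorm p := max_comm _ _

lemma sq_add_one_le_natAbs_det_of_fst_eq {k : ℕ} {w x : ℤ × ℤ} (hw₁ : w.1 = k)
    (hw : supNorm w = k) (hx : supNorm x = k) (hs : k < supNorm (w + x))
    (hd : k < supNorm (w - x)) : k ^ 2 + 1 ≤ (w.1 * x.2 - w.2 * x.1).natAbs := by
  obtain ⟨_, a⟩ := w
  obtain ⟨b, c⟩ := x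
  simp only [supNorm, Prod.mk_add_mk, Prod.mk_sub_mk] at hw₁ hw hx hs hd ⊢
  subst hw₁
  have ha : a.natAbs ≤ k := hw ▸ le_max_right _ _
  clear hw
  suffices h : (k : ℤ) ^ 2 + 1 ≤ k * c - a * b ∨ k * c - a * b ≤ -((k : ℤ) ^ 2 + 1) by
    zify; rw [le_abs]; rcases h with h | h <;> [left; right] <;> linarith
  -- the sign of `b` decides which of `hs`, `hd` carries information
  obtain ⟨hb, hac⟩ | ⟨hb, hac⟩ :
      (0 < b ∧ k < (a - c).natAbs) ∨ (b < 0 ∧ k < (a + c).natAbs) := by omega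
  · obtain ⟨rfl, ha⟩ | ⟨rfl, ha⟩ | rfl :
        (c = k ∧ a < 0) ∨ (c = -k ∧ 0 < a) ∨ b = k := by omega
    · left; nlinarith
    · right; nlinarith
    · obtain h | h : k + 1 ≤ c - a ∨ c - a ≤ -(k + 1) := by omega
      · left; nlinarith
      · right; nlinarith
  · obtain ⟨rfl, ha⟩ | ⟨rfl, ha⟩ | rfl :
        (c = k ∧ 0 < a) ∨ (c = -k ∧ a < 0) ∨ b = -k := by omega
    · left; nlinarith
    · right; nlinarith
    · obtain h | h : k + 1 ≤ a + c ∨ a + c ≤ -(k + 1) := by omega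
      · left; nlinarith
      · right; nlinarith

lemma sq_add_one_le_natAbs_det {k : ℕ} {w x : ℤ × ℤ} (hw : supNorm w = k)
    (hx : supNorm x = k) (hs : k < supNorm (w + x)) (hd : k < supNorm (w - x)) :
    k ^ 2 + 1 ≤ (w.1 * x.2 - w.2 * x.1).natAbs := by
  wlog hw₁ : w.1.natAbs = k generalizing w x
  · have := this (w := w.swap) (x := x.swap) (by simpa) (by simpa)
      (hs.trans_eq (supNorm_swap _).symm) (hd.trans_eq (supNorm_swap _).symm)
      (by unfold supNorm at hw; simp only [Prod.fst_swap]; omega)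
    rw [← Int.natAbs_neg]
    convert this using 3
    simp only [Prod.fst_swap, Prod.snd_swap]
    ring
  wlog hw₁ : w.1 = k generalizing w x
  · have hneg : supNorm (-w + x) = supNorm (w - x) ∧ supNorm (-w - x) = supNorm (w + x) := by
      rw [← supNorm_neg (w - x), ← supNorm_neg (w + x)]; constructor <;> congr 1 <;> abel
    have := this (w := -w) (x := x) (by simpa) hx (hneg.1 ▸ hd) (hneg.2 ▸ hs) (by simpa)
      (by simp; omega)
    rw [← Int.natAbs_neg]
    convert this using 3
    simp only [Prod.fst_neg, Prod.snd_neg]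
    ring
  exact sq_add_one_le_natAbs_det_of_fst_eq hw₁ hw hx hs hd

def rotHom : ℤ × ℤ →+ ℤ × ℤ :=
  (AddMonoidHom.fst ℤ ℤ + AddMonoidHom.snd ℤ ℤ).prod
    (AddMonoidHom.fst ℤ ℤ - AddMonoidHom.snd ℤ ℤ)

@[simp] lemma rotHom_apply (w : ℤ × ℤ) : rotHom w = (w.1 + w.2, w.1 - w.2) := rfl

lemma l1norm_rotHom (w : ℤ × ℤ) : l1norm (rotHom w) = 2 * supNorm w := by
  simp only [rotHom_apply, l1norm, supNorm]
  omega

lemma exists_rotHom_eq {u : ℤ × ℤ} (hu : Even (l1norm u)) : ∃ w, rotHom w = u := by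
  obtain ⟨m, hm⟩ := hu
  unfold l1norm at hm
  exact ⟨((u.1 + u.2) / 2, (u.1 - u.2) / 2), by ext <;> simp only [rotHom_apply] <;> omega⟩

lemma det_rotHom (w x : ℤ × ℤ) :
    (rotHom w).1 * (rotHom x).2 - (rotHom w).2 * (rotHom x).1 =
      -2 * (w.1 * x.2 - w.2 * x.1) := by
  simp only [rotHom_apply]
  ring

theorem two_mul_sq_add_two_le_natAbs_det {k : ℕ} {u v : ℤ × ℤ} (hu : l1norm u = 2 * k)
    (hv : l1norm v = 2 * k) (hs : 2 * k + 1 ≤ l1norm (u + v))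
    (hd : 2 * k + 1 ≤ l1norm (u - v)) :
    2 * k ^ 2 + 2 ≤ (u.1 * v.2 - u.2 * v.1).natAbs := by
  obtain ⟨w, rfl⟩ := exists_rotHom_eq (hu ▸ even_two_mul k)
  obtain ⟨x, rfl⟩ := exists_rotHom_eq (hv ▸ even_two_mul k)
  rw [← map_add, l1norm_rotHom] at hs
  rw [← map_sub, l1norm_rotHom] at hd
  rw [l1norm_rotHom] at hu hv
  have := sq_add_one_le_natAbs_det (k := k) (w := w) (x := x)
    (by omega) (by omega) (by omega) (by omega)
  rw [det_rotHom, Int.natAbs_mul]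
  simp only [Int.reduceNeg, Int.reduceAbs]
  omega

lemma natAbs_det_le_l1norm_mul (u v : ℤ × ℤ) :
    (u.1 * v.2 - u.2 * v.1).natAbs ≤ l1norm u * l1norm v := by
  calc (u.1 * v.2 - u.2 * v.1).natAbs
      ≤ u.1.natAbs * v.2.natAbs + u.2.natAbs * v.1.natAbs := by
        rw [← Int.natAbs_mul, ← Int.natAbs_mul]; exact Int.natAbs_sub_le _ _
    _ ≤ l1norm u * l1norm v := by
        unfold l1norm
        nlinarith [Nat.zero_le (u.1.natAbs * v.1.natAbs), Nat.zero_le (u.2.natAbs * v.2.natAbs)]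

lemma linearIndependent_pair_of_det_ne_zero {R : Type*} [CommRing R] [NoZeroDivisors R]
    {u v : R × R} (h : u.1 * v.2 - u.2 * v.1 ≠ 0) : LinearIndependent R ![u, v] := by
  refine LinearIndependent.pair_iff.mpr fun m n hmn => ?_
  have h1 : m * u.1 + n * v.1 = 0 := by simpa using congrArg Prod.fst hmn
  have h2 : m * u.2 + n * v.2 = 0 := by simpa using congrArg Prod.snd hmn
  have hm : m * (u.1 * v.2 - u.2 * v.1) = 0 := by linear_combination v.2 * h1 - v.1 * h2
  have hn : n * (u.1 * v.2 - u.2 * v.1) = 0 := by linear_combination u.1 * h2 - u.2 * h1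
  exact ⟨(mul_eq_zero.mp hm).resolve_right h, (mul_eq_zero.mp hn).resolve_right h⟩

theorem AddSubgroup.index_dvd_natAbs_det {Λ : AddSubgroup (ℤ × ℤ)} {u v : ℤ × ℤ}
    (hu : u ∈ Λ) (hv : v ∈ Λ) : Λ.index ∣ (u.1 * v.2 - u.2 * v.1).natAbs := by
  by_cases hdet : u.1 * v.2 - u.2 * v.1 = 0
  · simp [hdet]
  have hli := linearIndependent_pair_of_det_ne_zero hdet
  let L := (Submodule.span ℤ (Set.range ![u, v])).toAddSubgroup
  have hL : L ≤ Λ := by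
    intro x hx
    refine Submodule.span_le (p := Λ.toIntSubmodule) |>.mpr ?_ hx
    rintro _ ⟨i, rfl⟩
    fin_cases i <;> assumption
  have hidx := AddSubgroup.index_eq_natAbs_det (Module.Basis.finTwoProd ℤ) L
    (Module.Basis.span hli)
  have h0 : ((Module.Basis.span hli 0 : L) : ℤ × ℤ) = u := by
    rw [Module.Basis.span_apply]; rfl
  have h1 : ((Module.Basis.span hli 1 : L) : ℤ × ℤ) = v := by
    rw [Module.Basis.span_apply]; rfl
  rw [Module.Basis.det_apply, Matrix.det_fin_two] at hidx
  simp only [Module.Basis.toMatrix_apply, h0, h1, Module.Basis.coe_finTwoProd_repr,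
    Matrix.cons_val_zero, Matrix.cons_val_one] at hidx
  rw [show u.1 * v.2 - u.2 * v.1 = u.1 * v.2 - v.1 * u.2 by ring, ← hidx]
  exact AddSubgroup.index_dvd_of_le hL

theorem AddSubgroup.exists_ne_sub_mem_of_index_lt {A : Type*} [AddCommGroup A]
    {Λ : AddSubgroup A} [Λ.FiniteIndex] {s : Finset A} (h : Λ.index < #s) :
    ∃ p ∈ s, ∃ q ∈ s, p ≠ q ∧ q - p ∈ Λ := by
  have := Fintype.ofFinite (A ⧸ Λ)
  obtain ⟨p, hp, q, hq, hne, heq⟩ := exists_ne_map_eq_of_card_lt_of_maps_to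
    (t := univ) (f := ((↑) : A → A ⧸ Λ)) (by rwa [card_univ, ← Nat.card_eq_fintype_card,
      ← AddSubgroup.index_eq_card]) (fun _ _ => mem_univ _)
  exact ⟨p, hp, q, hq, hne, by rwa [QuotientAddGroup.eq, neg_add_eq_sub] at heq⟩

lemma exists_pair_l1norm_eq {Λ : AddSubgroup (ℤ × ℤ)} {k : ℕ} (hk : 2 ≤ k)
    (hidx : Λ.index = 2 * k ^ 2 + 1) (hmin : ∀ z ∈ Λ, z ≠ 0 → 2 * k ≤ l1norm z) :
    ∃ u ∈ Λ, ∃ v ∈ Λ, l1norm u = 2 * k ∧ l1norm v = 2 * k ∧ v ≠ u ∧ v ≠ -u := by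
  have : Λ.FiniteIndex := ⟨by omega⟩
  have hnorm : ∀ p ∈ l1Ball k, ∀ q ∈ l1Ball k, p ≠ q → q - p ∈ Λ → l1norm (q - p) = 2 * k :=
    fun p hp q hq hne hmem => le_antisymm (l1norm_sub_le_of_mem_l1Ball hp hq)
      (hmin _ hmem (sub_ne_zero.mpr hne.symm))
  obtain ⟨p, hp, q, hq, hpq, hu⟩ :=
    Λ.exists_ne_sub_mem_of_index_lt (s := l1Ball k) (by rw [card_l1Ball]; omega)
  have hu2 := hnorm p hp q hq hpq hu
  -- pigeonholing among the points that `q - p` moves out of the ball avoids `v = ±(q - p)`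
  have hcard : Λ.index < #((l1Ball k).filter (· + (q - p) ∉ l1Ball k)) := by
    have := card_filter_add_card_filter_not (s := l1Ball k) (· + (q - p) ∈ l1Ball k)
    have := card_filter_add_mem_l1Ball_le hu2
    rw [card_l1Ball] at *
    nlinarith
  obtain ⟨p', hp', q', hq', hpq', hv⟩ := Λ.exists_ne_sub_mem_of_index_lt hcard
  rw [mem_filter] at hp' hq'
  refine ⟨q - p, hu, q' - p', hv, hu2, hnorm p' hp'.1 q' hq'.1 hpq' hv, fun h => ?_,
    fun h => ?_⟩
  · exact hp'.2 (by rw [← h, add_sub_cancel]; exact hq'.1)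
  · exact hq'.2 (by rw [← neg_neg (q - p), ← h, neg_sub, add_sub_cancel]; exact hp'.1)

lemma nsmul_eq_mod_two_nsmul {G : Type*} [AddMonoid G] {t : G} (ht : 2 • t = 0) (n : ℕ) :
    n • t = (n % 2) • t := by
  conv_lhs => rw [← Nat.div_add_mod n 2, add_nsmul, mul_nsmul, ht, nsmul_zero, zero_add]

lemma zsmul_eq_emod_two_zsmul {G : Type*} [AddGroup G] {t : G} (ht : 2 • t = 0) (n : ℤ) :
    n • t = (n % 2) • t := by
  conv_lhs => rw [← Int.mul_ediv_add_emod n 2, add_zsmul, mul_zsmul', two_zsmul, ← two_nsmul,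
    ht, zsmul_zero, zero_add]

lemma mem_zmultiples_iff_of_two_nsmul_eq_zero {G : Type*} [AddGroup G] {t x : G}
    (ht : 2 • t = 0) : x ∈ AddSubgroup.zmultiples t ↔ x = 0 ∨ x = t := by
  refine ⟨fun ⟨n, hn⟩ => ?_, ?_⟩
  · rw [← hn]
    change n • t = 0 ∨ n • t = t
    rw [zsmul_eq_emod_two_zsmul ht]
    obtain h | h := Int.emod_two_eq n <;> simp [h]
  · rintro (rfl | rfl)
    · exact zero_mem _
    · exact AddSubgroup.mem_zmultiples _

theorem AddSubgroup.index_comap_of_surjective_mk {A G : Type*} [AddGroup A] [AddGroup G]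
    (H : AddSubgroup G) [H.Normal] (f : A →+ G)
    (hf : Function.Surjective ((QuotientAddGroup.mk' H).comp f)) :
    (H.comap f).index = H.index := by
  conv_lhs => rw [← QuotientAddGroup.ker_mk' H]
  rw [AddMonoidHom.comap_ker, AddSubgroup.index_ker, AddMonoidHom.range_eq_top.mpr hf,
    AddSubgroup.card_top, AddSubgroup.index_eq_card]

section Cover

variable {G : Type*} [AddCommGroup G]

def pairHom (a b : G) : ℤ × ℤ →+ G := (zmultiplesHom G a).coprod (zmultiplesHom G b)

@[simp] lemma pairHom_apply (a b : G) (p : ℤ × ℤ) : pairHom a b p = p.1 • a + p.2 • b := rfl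

/-- The words `α • a + β • b + γ • t` with `γ` reduced mod 2: `Sum.inl p` has `γ = 0`,
`Sum.inr p` has `γ = 1`. -/
def coverMap (a b t : G) : (ℤ × ℤ) ⊕ (ℤ × ℤ) → G :=
  Sum.elim (pairHom a b) (pairHom a b · + t)

noncomputable def coverSet (k : ℕ) : Finset ((ℤ × ℤ) ⊕ (ℤ × ℤ)) :=
  (l1Ball k).disjSum (l1Ball (k - 1))

lemma card_coverSet {k : ℕ} (hk : 1 ≤ k) : #(coverSet k) = 4 * k ^ 2 + 2 := by
  rw [coverSet, card_disjSum, card_l1Ball, card_l1Ball]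
  zify [hk]
  ring

variable {a b t : G} {k : ℕ}

lemma surjOn_coverMap (ht : 2 • t = 0)
    (hdiam : ∀ g : G, ∃ (α β : ℤ) (γ : ℕ),
      g = α • a + β • b + γ • t ∧ α.natAbs + β.natAbs + γ ≤ k) :
    Set.SurjOn (coverMap a b t) (coverSet k) Set.univ := by
  intro g _
  obtain ⟨α, β, γ, rfl, hγ⟩ := hdiam g
  rw [nsmul_eq_mod_two_nsmul ht]
  obtain h | h := Nat.mod_two_eq_zero_or_one γ
  · refine ⟨Sum.inl (α, β), ?_, by simp [coverMap, h]⟩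
    rw [coverSet, mem_coe, inl_mem_disjSum, mem_l1Ball, l1norm]
    omega
  · refine ⟨Sum.inr (α, β), ?_, by simp [coverMap, h]⟩
    rw [coverSet, mem_coe, inr_mem_disjSum, mem_l1Ball, l1norm]
    omega

variable [Fintype G]

lemma card_eq_of_four_mul_sq_lt (hk : 1 ≤ k) (ht0 : t ≠ 0) (ht : 2 • t = 0)
    (hdiam : ∀ g : G, ∃ (α β : ℤ) (γ : ℕ),
      g = α • a + β • b + γ • t ∧ α.natAbs + β.natAbs + γ ≤ k)
    (hG : 4 * k ^ 2 < Fintype.card G) : Fintype.card G = 4 * k ^ 2 + 2 := by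
  have hle := card_le_card_of_surjOn (s := coverSet k) (t := (univ : Finset G))
    (coverMap a b t) (by rw [coe_univ]; exact surjOn_coverMap ht hdiam)
  rw [card_univ, card_coverSet hk] at hle
  have : Fact (Nat.Prime 2) := ⟨Nat.prime_two⟩
  have heven : 2 ∣ Fintype.card G := addOrderOf_eq_prime ht ht0 ▸ addOrderOf_dvd_card
  omega

lemma injOn_coverMap (hk : 1 ≤ k) (ht : 2 • t = 0)
    (hdiam : ∀ g : G, ∃ (α β : ℤ) (γ : ℕ),
      g = α • a + β • b + γ • t ∧ α.natAbs + β.natAbs + γ ≤ k)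
    (hcard : Fintype.card G = 4 * k ^ 2 + 2) : Set.InjOn (coverMap a b t) (coverSet k) :=
  injOn_of_surjOn_of_card_le (t := (univ : Finset G)) _ (fun _ _ => mem_coe.mpr (mem_univ _))
    (by rw [coe_univ]; exact surjOn_coverMap ht hdiam)
    (by rw [card_coverSet hk, card_univ, hcard])

lemma two_mul_index_comap_pairHom (ht0 : t ≠ 0) (ht : 2 • t = 0)
    (hdiam : ∀ g : G, ∃ (α β : ℤ) (γ : ℕ),
      g = α • a + β • b + γ • t ∧ α.natAbs + β.natAbs + γ ≤ k) :
    2 * ((AddSubgroup.zmultiples t).comap (pairHom a b)).index = Fintype.card G := by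
  rw [AddSubgroup.index_comap_of_surjective_mk]
  · have : Fact (Nat.Prime 2) := ⟨Nat.prime_two⟩
    rw [← Nat.card_eq_fintype_card, ← AddSubgroup.index_mul_card (AddSubgroup.zmultiples t),
      Nat.card_zmultiples, addOrderOf_eq_prime ht ht0, mul_comm]
  · intro g
    obtain ⟨g, rfl⟩ := QuotientAddGroup.mk_surjective g
    obtain ⟨α, β, γ, rfl, -⟩ := hdiam g
    refine ⟨(α, β), QuotientAddGroup.eq.mpr ?_⟩
    rw [pairHom_apply, neg_add_cancel_left]
    exact AddSubgroup.nsmul_mem _ (AddSubgroup.mem_zmultiples t) γ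

end Cover

section InjOn

variable {G : Type*} [AddCommGroup G] {a b t : G} {k : ℕ}
  (hinj : Set.InjOn (coverMap a b t) (coverSet k))
include hinj

lemma two_mul_add_one_le_l1norm_of_pairHom_eq_zero {z : ℤ × ℤ} (hz : pairHom a b z = 0)
    (hz0 : z ≠ 0) : 2 * k + 1 ≤ l1norm z := by
  by_contra! h
  obtain ⟨x, hx, hxz⟩ := exists_l1norm_le_l1norm_add_le (r₁ := k) (r₂ := k) (z := z) (by omega)
  have := @hinj (Sum.inl x) (by simpa [coverSet, mem_l1Ball]) (Sum.inl (x + z))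
    (by simpa [coverSet, mem_l1Ball])
    (by simp only [coverMap, Sum.elim_inl, map_add, hz, add_zero])
  exact hz0 (left_eq_add.mp (Sum.inl_injective this))

lemma two_mul_le_l1norm_of_pairHom_eq {z : ℤ × ℤ} (hz : pairHom a b z = t) :
    2 * k ≤ l1norm z := by
  by_contra! h
  obtain ⟨x, hx, hxz⟩ :=
    exists_l1norm_le_l1norm_add_le (r₁ := k - 1) (r₂ := k) (z := z) (by omega)
  exact Sum.inr_ne_inl <| hinj (by simpa [coverSet, mem_l1Ball]) (by simpa [coverSet, mem_l1Ball])
    (by simp only [coverMap, Sum.elim_inl, Sum.elim_inr, map_add, hz])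

variable (ht : 2 • t = 0)
include ht

lemma two_mul_le_l1norm_of_mem_comap {z : ℤ × ℤ}
    (hz : z ∈ (AddSubgroup.zmultiples t).comap (pairHom a b)) (hz0 : z ≠ 0) :
    2 * k ≤ l1norm z := by
  rcases (mem_zmultiples_iff_of_two_nsmul_eq_zero ht).mp hz with h | h
  · exact (Nat.le_succ _).trans (two_mul_add_one_le_l1norm_of_pairHom_eq_zero hinj h hz0)
  · exact two_mul_le_l1norm_of_pairHom_eq hinj h

lemma pairHom_eq_of_mem_comap_of_l1norm_eq (hk : 1 ≤ k) {z : ℤ × ℤ}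
    (hz : z ∈ (AddSubgroup.zmultiples t).comap (pairHom a b)) (hz2 : l1norm z = 2 * k) :
    pairHom a b z = t := by
  refine ((mem_zmultiples_iff_of_two_nsmul_eq_zero ht).mp hz).resolve_left fun h => ?_
  have hz0 : z ≠ 0 := by
    rintro rfl
    simp [l1norm] at hz2
    omega
  have := two_mul_add_one_le_l1norm_of_pairHom_eq_zero hinj h hz0
  omega

lemma two_mul_add_one_le_l1norm_add_sub {u v : ℤ × ℤ} (hu : pairHom a b u = t)
    (hv : pairHom a b v = t) (hvu : v ≠ u) (hvnu : v ≠ -u) :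
    2 * k + 1 ≤ l1norm (u + v) ∧ 2 * k + 1 ≤ l1norm (u - v) :=
  ⟨two_mul_add_one_le_l1norm_of_pairHom_eq_zero hinj (by rw [map_add, hu, hv, ← two_nsmul, ht])
      fun h => hvnu (eq_neg_of_add_eq_zero_right h),
    two_mul_add_one_le_l1norm_of_pairHom_eq_zero hinj (by rw [map_sub, hu, hv, sub_self])
      (sub_ne_zero.mpr hvu.symm)⟩

end InjOn

/-- **Optimality for `(r_α, r_ω, z_ω) = (1, 2, 0)`:**
if a finite abelian group `G` has elements `a, b` and a nonzero involution `t` such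
that every element of `G` is a sum `α • a + β • b + γ • t` with `α, β ∈ ℤ`, `γ ∈ ℕ`
and `|α| + |β| + γ ≤ k` (i.e. the mixed Cayley graph with undirected generators
`±a, ±b` and involution `t` has diameter at most `k`), then `|G| ≤ 4k²`.
In particular, the Moore bound `M_AC(1,2,0,k) = 4k² + 2` is not attainable. -/
theorem stmt_8 {G : Type*} [AddCommGroup G] [Fintype G] (k : ℕ) (hk : 2 ≤ k)
    (a b t : G) (ht0 : t ≠ 0) (ht : 2 • t = 0)
    (hdiam : ∀ g : G, ∃ (α β : ℤ) (γ : ℕ),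
      g = α • a + β • b + γ • t ∧ α.natAbs + β.natAbs + γ ≤ k) :
    Fintype.card G ≤ 4 * k ^ 2 := by
  by_contra! hG
  have hcard := card_eq_of_four_mul_sq_lt (by omega) ht0 ht hdiam hG
  have hinj := injOn_coverMap (by omega) ht hdiam hcard
  have hidx : ((AddSubgroup.zmultiples t).comap (pairHom a b)).index = 2 * k ^ 2 + 1 := by
    have := two_mul_index_comap_pairHom ht0 ht hdiam
    omega
  obtain ⟨u, hu, v, hv, hu2, hv2, hvu, hvnu⟩ :=
    exists_pair_l1norm_eq hk hidx fun z => two_mul_le_l1norm_of_mem_comap hinj ht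
  obtain ⟨hs, hd⟩ := two_mul_add_one_le_l1norm_add_sub hinj ht
    (pairHom_eq_of_mem_comap_of_l1norm_eq hinj ht (by omega) hu hu2)
    (pairHom_eq_of_mem_comap_of_l1norm_eq hinj ht (by omega) hv hv2) hvu hvnu
  have hlow := two_mul_sq_add_two_le_natAbs_det hu2 hv2 hs hd
  have hup := natAbs_det_le_l1norm_mul u v
  rw [hu2, hv2] at hup
  have hdvd := AddSubgroup.index_dvd_natAbs_det hu hv
  rw [hidx] at hdvd
  have := Nat.eq_of_dvd_of_lt_two_mul (by omega) hdvd (by nlinarith)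
  omega
end

section
/- Let x ≥ 2 and let G = (ℤ/6xℤ) × (ℤ/2xℤ). Every element g ∈ G can be written as g = α·(1,0) + β·(0,1) + γ·(3x, x) with α ∈ ℤ, β, γ ∈ ℕ, and |α| + β + γ ≤ 3x − 1. In other words, the mixed Cayley graph Cay(ℤ_{6x} × ℤ_{2x}, {±(1,0), (0,1), (3x,x)}), with undirected generator ±(1,0), directed generator (0,1), and involution (3x,x), has diameter at most k = 3x − 1; its order is 12x². -/
/-- **`Cay(ℤ_{6x} × ℤ_{2x}, {±(1,0), (0,1), (3x,x)})` has diameter at most `3x − 1`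
and order `12x²`.**
For `x ≥ 2`, every element of `(ℤ/6xℤ) × (ℤ/2xℤ)` is a sum
`α·(1,0) + β·(0,1) + γ·(3x,x)` with `α ∈ ℤ`, `β, γ ∈ ℕ` and `|α| + β + γ ≤ 3x − 1`.
This is case `(a)` of the proposition on optimal mixed Abelian Cayley graphs with
`(r_α, r_ω, z_ω) = (1, 1, 1)`. -/
theorem stmt_10 (x : ℕ) (hx : 2 ≤ x) :
    (∀ g : ZMod (6 * x) × ZMod (2 * x), ∃ (α : ℤ) (β γ : ℕ),
      g = α • ((1 : ZMod (6 * x)), (0 : ZMod (2 * x)))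
            + β • ((0 : ZMod (6 * x)), (1 : ZMod (2 * x)))
            + γ • (((3 * x : ℕ) : ZMod (6 * x)), ((x : ℕ) : ZMod (2 * x))) ∧
      α.natAbs + β + γ ≤ 3 * x - 1) ∧
    Nat.card (ZMod (6 * x) × ZMod (2 * x)) = 12 * x ^ 2 := by
  haveI : NeZero (6 * x) := ⟨by omega⟩
  haveI : NeZero (2 * x) := ⟨by omega⟩
  constructor
  · intro g
    set a := g.1.val with ha_def
    set b := g.2.val with hb_def
    have ha : a < 6 * x := ZMod.val_lt _
    have hb : b < 2 * x := ZMod.val_lt _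
    have key : ∀ (A : ℤ) (β γ : ℕ), ((6 * x : ℕ) : ℤ) ∣ (A + γ * (3 * x) - a) →
        ((2 * x : ℕ) : ℤ) ∣ ((β : ℤ) + γ * x - b) → A.natAbs + β + γ ≤ 3 * x - 1 →
        ∃ (α : ℤ) (β γ : ℕ),
          g = α • ((1 : ZMod (6 * x)), (0 : ZMod (2 * x)))
            + β • ((0 : ZMod (6 * x)), (1 : ZMod (2 * x)))
            + γ • (((3 * x : ℕ) : ZMod (6 * x)), ((x : ℕ) : ZMod (2 * x))) ∧
          α.natAbs + β + γ ≤ 3 * x - 1 := by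
      intro A β γ h1 h2 h3
      refine ⟨A, β, γ, ?_, h3⟩
      have e1 : ((A + γ * (3 * x) - a : ℤ) : ZMod (6 * x)) = 0 :=
        (ZMod.intCast_zmod_eq_zero_iff_dvd _ _).mpr h1
      have e2 : (((β : ℤ) + γ * x - b : ℤ) : ZMod (2 * x)) = 0 :=
        (ZMod.intCast_zmod_eq_zero_iff_dvd _ _).mpr h2
      have g1 : g.1 = ((a : ℕ) : ZMod (6 * x)) := by
        simp [ha_def, ZMod.natCast_val, ZMod.cast_id]
      have g2 : g.2 = ((b : ℕ) : ZMod (2 * x)) := by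
        simp [hb_def, ZMod.natCast_val, ZMod.cast_id]
      have : g = (g.1, g.2) := rfl
      rw [this, g1, g2]
      push_cast at e1 e2
      ext <;> simp [Prod.smul_def, zsmul_eq_mul, nsmul_eq_mul]
      · linear_combination -e1
      · linear_combination -e2
    by_cases h1 : a + b ≤ 3 * x - 1
    · refine key (a : ℤ) b 0 ⟨0, by push_cast; ring⟩ ⟨0, by push_cast; ring⟩ ?_
      simpa using h1
    · by_cases h2 : (6 * x - a) + b ≤ 3 * x - 1
      · refine key ((a : ℤ) - 6 * x) b 0 ⟨-1, by push_cast; ring⟩ ⟨0, by push_cast; ring⟩ ?_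
        have : ((a : ℤ) - 6 * x).natAbs = 6 * x - a := by omega
        omega
      · by_cases hbx : x ≤ b
        · refine key ((a : ℤ) - 3 * x) (b - x) 1 ⟨0, by push_cast; ring⟩
            ⟨0, by push_cast [hbx]; ring⟩ ?_
          have : ((a : ℤ) - 3 * x).natAbs ≤ b := by omega
          omega
        · refine key ((a : ℤ) - 3 * x) (b + x) 1 ⟨0, by push_cast; ring⟩
            ⟨1, by push_cast; ring⟩ ?_
          have : ((a : ℤ) - 3 * x).natAbs ≤ b := by omega
          omega
  · rw [Nat.card_prod, Nat.card_zmod, Nat.card_zmod]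
    ring
end

section
/- Let x ≥ 1 and let N = 12x² + 8x. In the cyclic group ℤ/Nℤ, every element n can be written as n = α·1 + β·(12x² + 2x − 1) + γ·(6x² + 4x) with α ∈ ℤ, β, γ ∈ ℕ, and |α| + β + γ ≤ 3x. In other words, the mixed circulant graph Circ(12x²+8x; ±1, 12x²+2x−1, 6x²+4x), with undirected generator ±1, directed generator 12x²+2x−1, and involution 6x²+4x, has diameter at most k = 3x. -/
private lemma key (x : ℕ) (hx : 1 ≤ x) (n : ZMod (12 * x ^ 2 + 8 * x)) (m : ℕ)
    (hm : ((m : ℕ) : ZMod (12 * x ^ 2 + 8 * x)) = -n) (α k : ℤ) (β γ : ℕ)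
    (h : α + (β : ℤ) * (12 * (x:ℤ) ^ 2 + 2 * x - 1) + (γ : ℤ) * (6 * (x:ℤ) ^ 2 + 4 * x)
        + (m : ℤ) = k * (12 * (x:ℤ) ^ 2 + 8 * x)) :
    n = α • (1 : ZMod (12 * x ^ 2 + 8 * x))
          + β • ((12 * x ^ 2 + 2 * x - 1 : ℕ) : ZMod (12 * x ^ 2 + 8 * x))
          + γ • ((6 * x ^ 2 + 4 * x : ℕ) : ZMod (12 * x ^ 2 + 8 * x)) := by
  have h1 : (1 : ℕ) ≤ 12 * x ^ 2 + 2 * x := by nlinarith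
  have hN : ((12 * x ^ 2 + 8 * x : ℕ) : ZMod (12 * x ^ 2 + 8 * x)) = 0 := ZMod.natCast_self _
  have hc := congrArg (fun z : ℤ => (z : ZMod (12 * x ^ 2 + 8 * x))) h
  simp only [Int.cast_add, Int.cast_mul, Int.cast_sub, Int.cast_one, Int.cast_natCast,
    Int.cast_ofNat, Int.cast_pow, Int.cast_mul] at hc
  push_cast at hc hN ⊢
  rw [Nat.cast_sub h1]
  push_cast
  rw [zsmul_eq_mul, mul_one]
  linear_combination -hc + hm - k * hN

/-- **`Circ(12x²+8x; ±1, 12x²+2x−1, 6x²+4x)` has diameter at most `3x`.**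
For `x ≥ 1`, every element of `ℤ/(12x²+8x)ℤ` is a sum
`α·1 + β·(12x²+2x−1) + γ·(6x²+4x)` with `α ∈ ℤ`, `β, γ ∈ ℕ` and `|α| + β + γ ≤ 3x`.
This is case `(b)` of the proposition on optimal mixed Abelian Cayley graphs with
`(r_α, r_ω, z_ω) = (1, 1, 1)`. -/
theorem stmt_11 (x : ℕ) (hx : 1 ≤ x) :
    ∀ n : ZMod (12 * x ^ 2 + 8 * x), ∃ (α : ℤ) (β γ : ℕ),
      n = α • (1 : ZMod (12 * x ^ 2 + 8 * x))
            + β • ((12 * x ^ 2 + 2 * x - 1 : ℕ) : ZMod (12 * x ^ 2 + 8 * x))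
            + γ • ((6 * x ^ 2 + 4 * x : ℕ) : ZMod (12 * x ^ 2 + 8 * x)) ∧
      α.natAbs + β + γ ≤ 3 * x := by
  intro n
  have hNpos : 0 < 12 * x ^ 2 + 8 * x := by nlinarith
  haveI : NeZero (12 * x ^ 2 + 8 * x) := ⟨hNpos.ne'⟩
  set m : ℕ := (-n).val with hmdef
  have hm : ((m : ℕ) : ZMod (12 * x ^ 2 + 8 * x)) = -n := ZMod.natCast_rightInverse (-n)
  have hmlt : m < 12 * x ^ 2 + 8 * x := ZMod.val_lt _
  set q : ℕ := m / (6 * x + 1) with hqdef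
  set r : ℕ := m % (6 * x + 1) with hrdef
  have hqr : (6 * x + 1) * q + r = m := Nat.div_add_mod _ _
  have hr : r < 6 * x + 1 := Nat.mod_lt _ (by omega)
  have hq : q ≤ 2 * x := by
    by_contra hq'
    push_neg at hq'
    have h2 : (6 * x + 1) * (2 * x + 1) ≤ (6 * x + 1) * q := Nat.mul_le_mul_left _ hq'
    nlinarith
  have hqrZ : ((m : ℤ)) = (6 * (x:ℤ) + 1) * q + r := by exact_mod_cast hqr.symm
  by_cases hc1 : q + r ≤ 3 * x
  · exact ⟨-(r : ℤ), q, 0, key x hx n m hm _ (q : ℤ) _ _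
      (by rw [hqrZ]; push_cast; ring), by omega⟩
  by_cases hc2 : q + 3 * x + 2 ≤ r
  · exact ⟨(6 * (x:ℤ) + 1) - r, q + 1, 0, key x hx n m hm _ ((q : ℤ) + 1) _ _
      (by rw [hqrZ]; push_cast; ring), by omega⟩
  -- gap region : 3x+1-q ≤ r ≤ 3x+q+1
  by_cases hc3 : q + 1 ≤ x
  · exact ⟨(3 * (x:ℤ) + 1) - r, q + x + 1, 1, key x hx n m hm _ ((q : ℤ) + x + 1) _ _
      (by rw [hqrZ]; push_cast; ring), by omega⟩
  by_cases hc4 : q + r + 1 ≤ 7 * x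
  · have hxq : x ≤ q := by omega
    refine ⟨(3 * (x:ℤ)) - r, q - x, 1, key x hx n m hm _ ((q : ℤ) - x + 1) _ _ ?_, ?_⟩
    · rw [hqrZ]; push_cast [Nat.cast_sub hxq]; ring
    · have : ((q - x : ℕ) : ℤ) = (q : ℤ) - x := by push_cast [Nat.cast_sub hxq]; ring
      omega
  · have hq2 : q = 2 * x := by omega
    refine ⟨(6 * (x:ℤ)) - r, 0, 0, key x hx n m hm _ 1 _ _ ?_, by omega⟩
    have hqZ : (q : ℤ) = 2 * x := by exact_mod_cast hq2
    rw [hqrZ, hqZ]; push_cast; ring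
end

section
/- Let x ≥ 1 and let N = 12x² + 16x + 4. In the cyclic group ℤ/Nℤ, every element n can be written as n = α·1 + β·(6x + 5) + γ·(6x² + 8x + 2) with α ∈ ℤ, β, γ ∈ ℕ, and |α| + β + γ ≤ 3x + 1. In other words, the mixed circulant graph Circ(12x²+16x+4; ±1, 6x+5, 6x²+8x+2), with undirected generator ±1, directed generator 6x+5, and involution 6x²+8x+2, has diameter at most k = 3x + 1. -/
/-- Arithmetic core: every `m < N = 12x²+16x+4` is `α + β(6x+5) + γ(6x²+8x+2)`
modulo `N` with `|α| + β + γ ≤ 3x+1`. -/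
lemma stmt_12_key (x N T m : ℕ) (hx : 1 ≤ x) (hN : N = 12 * x ^ 2 + 16 * x + 4)
    (hT : T = 6 * x ^ 2 + 8 * x + 2) (hm : m < N) :
    ∃ (α : ℤ) (β γ : ℕ) (d : ℤ),
      (α + (β : ℤ) * (6 * x + 5) + (γ : ℤ) * T : ℤ) = m + d * N ∧
      α.natAbs + β + γ ≤ 3 * x + 1 := by
  have hNZ : (N : ℤ) = 12 * (x : ℤ) ^ 2 + 16 * x + 4 := by exact_mod_cast congrArg (Nat.cast (R := ℤ)) hN
  have hTZ : (T : ℤ) = 6 * (x : ℤ) ^ 2 + 8 * x + 2 := by exact_mod_cast congrArg (Nat.cast (R := ℤ)) hT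
  by_cases h1 : N ≤ m + 3 * x + 1
  · exact ⟨(m : ℤ) - N, 0, 0, -1, by push_cast; ring, by omega⟩
  push_neg at h1
  set β := (m + 3 * x + 1) / (6 * x + 6) with hβdef
  set r := (m + 3 * x + 1) % (6 * x + 6) with hrdef
  have hu : (6 * x + 6) * β + r = m + 3 * x + 1 := Nat.div_add_mod _ _
  have huZ : ((6 : ℤ) * x + 6) * β + r = m + 3 * x + 1 := by exact_mod_cast congrArg (Nat.cast (R := ℤ)) hu
  have hr : r < 6 * x + 6 := Nat.mod_lt _ (by omega)
  have hq2 : (6 * x + 6) * (2 * x + 1) = N + 2 * x + 2 := by subst hN; ring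
  have hβ : β ≤ 2 * x := by
    by_contra hc
    have h3 : (6 * x + 6) * (2 * x + 1) ≤ (6 * x + 6) * β :=
      Nat.mul_le_mul_left _ (by omega)
    omega
  by_cases h2 : r + 2 * β ≤ 6 * x + 2
  · -- γ = 0 : n near β·(6x+5)
    exact ⟨(r : ℤ) + β - (3 * x + 1), β, 0, 0,
      by push_cast; linear_combination huZ, by omega⟩
  by_cases h3 : β < x
  · -- γ = 1, β' = β + x + 1 : n near β·(6x+5) + 3x+3 (mod N)
    exact ⟨(r : ℤ) + β - (6 * x + 4), β + x + 1, 1, 1,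
      by push_cast; linear_combination huZ + hTZ - hNZ, by omega⟩
  · -- γ = 1, β' = β - x : n near β·(6x+5) + 3x+2
    have hsub : ((β - x : ℕ) : ℤ) = (β : ℤ) - x := by omega
    refine ⟨(r : ℤ) + β - (6 * x + 3), β - x, 1, 0,
      by push_cast; linear_combination huZ + hTZ + (6 * (x : ℤ) + 5) * hsub, ?_⟩
    rcases Nat.lt_or_ge β (2 * x) with hc | hc
    · omega
    · have hb2 : β = 2 * x := le_antisymm hβ hc
      have h7 : (6 * x + 6) * β = (6 * x + 6) * (2 * x) := by rw [hb2]
      have h6 : (6 * x + 6) * (2 * x) + 4 * x + 4 = N := by subst hN; ring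
      omega

/-- **`Circ(12x²+16x+4; ±1, 6x+5, 6x²+8x+2)` has diameter at most `3x+1`.**
For `x ≥ 1`, every element of `ℤ/(12x²+16x+4)ℤ` is a sum
`α·1 + β·(6x+5) + γ·(6x²+8x+2)` with `α ∈ ℤ`, `β, γ ∈ ℕ` and `|α| + β + γ ≤ 3x + 1`.
This is case `(c)` of the proposition on optimal mixed Abelian Cayley graphs with
`(r_α, r_ω, z_ω) = (1, 1, 1)`. -/
theorem stmt_12 (x : ℕ) (hx : 1 ≤ x) :
    ∀ n : ZMod (12 * x ^ 2 + 16 * x + 4), ∃ (α : ℤ) (β γ : ℕ),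
      n = α • (1 : ZMod (12 * x ^ 2 + 16 * x + 4))
            + β • ((6 * x + 5 : ℕ) : ZMod (12 * x ^ 2 + 16 * x + 4))
            + γ • ((6 * x ^ 2 + 8 * x + 2 : ℕ) : ZMod (12 * x ^ 2 + 16 * x + 4)) ∧
      α.natAbs + β + γ ≤ 3 * x + 1 := by
  intro n
  haveI : NeZero (12 * x ^ 2 + 16 * x + 4) := ⟨by positivity⟩
  obtain ⟨α, β, γ, d, heq, hle⟩ :=
    stmt_12_key x (12 * x ^ 2 + 16 * x + 4) (6 * x ^ 2 + 8 * x + 2) n.val hx rfl rfl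
      (ZMod.val_lt n)
  refine ⟨α, β, γ, ?_, hle⟩
  have h2 := congrArg (fun z : ℤ => (z : ZMod (12 * x ^ 2 + 16 * x + 4))) heq
  simp only [Int.cast_add, Int.cast_mul, Int.cast_natCast, ZMod.natCast_self, mul_zero,
    add_zero] at h2
  rw [zsmul_eq_mul, mul_one]
  simp only [nsmul_eq_mul]
  rw [← ZMod.natCast_zmod_val n, ← h2]
  push_cast
  ring
end

section
/- Let G be an abelian group, let a_1,…,a_n ∈ G, and let b ∈ G with 2·b = 0. Let D ≥ 1 and suppose: (i) every g ∈ G can be written as g = Σ_{i=1}^{n} α_i·a_i + ε·b with α_i ∈ ℤ, ε ∈ ℕ, and Σ |α_i| + ε ≤ D; and (ii) some g_0 ∈ G admits no such representation with Σ |α_i| + ε ≤ D − 1. Let Q = G / ⟨b⟩ be the quotient of G by the subgroup generated by b, and let q : G → Q be the quotient map. Then every element of Q can be written as Σ_{i=1}^{n} α_i·q(a_i) with Σ |α_i| ≤ D, and there exists an element of Q that cannot be written as Σ_{i=1}^{n} α_i·q(a_i) with Σ |α_i| ≤ D − 2. In other words, the quotient Cayley graph Cay(G/⟨b⟩, {±q(a_1),…,±q(a_n)})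 has diameter D' with D − 1 ≤ D' ≤ D. -/
/-- **Contracting the edges of an involution in an Abelian Cayley graph** (Lemma,
part (ii)): if `Cay(G, {±a₁,…,±aₙ, b})`, where `2 • b = 0`, has diameter exactly `D`,
then the quotient Cayley graph `Cay(G/⟨b⟩, {±q(a₁),…,±q(aₙ)})` has diameter `D'`
with `D − 1 ≤ D' ≤ D`: every element of the quotient is a sum `Σ αᵢ • q(aᵢ)` with
`Σ |αᵢ| ≤ D`, and some element of the quotient admits no such representation with
`Σ |αᵢ| ≤ D − 2`. -/
theorem stmt_17 {G : Type*} [AddCommGroup G] (n : ℕ) (a : Fin n → G) (b : G)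
    (hb : 2 • b = 0) (D : ℕ) (hD : 1 ≤ D)
    (hle : ∀ g : G, ∃ (α : Fin n → ℤ) (ε : ℕ),
      g = (∑ i, α i • a i) + ε • b ∧ (∑ i, (α i).natAbs) + ε ≤ D)
    (hexact : ∃ g₀ : G, ∀ (α : Fin n → ℤ) (ε : ℕ),
      g₀ = (∑ i, α i • a i) + ε • b → ¬ ((∑ i, (α i).natAbs) + ε ≤ D - 1)) :
    (∀ y : G ⧸ AddSubgroup.zmultiples b, ∃ α : Fin n → ℤ,
      y = (∑ i, α i • QuotientAddGroup.mk' (AddSubgroup.zmultiples b) (a i)) ∧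
      (∑ i, (α i).natAbs) ≤ D) ∧
    (∃ y : G ⧸ AddSubgroup.zmultiples b, ∀ α : Fin n → ℤ,
      y = (∑ i, α i • QuotientAddGroup.mk' (AddSubgroup.zmultiples b) (a i)) →
      ¬ (((∑ i, (α i).natAbs : ℕ) : ℤ) ≤ (D : ℤ) - 2)) := by
  have hb0 : (QuotientAddGroup.mk' (AddSubgroup.zmultiples b)) b = 0 := by
    rw [QuotientAddGroup.mk'_apply, QuotientAddGroup.eq_zero_iff]
    exact AddSubgroup.mem_zmultiples b
  constructor
  · intro y
    obtain ⟨g, rfl⟩ := QuotientAddGroup.mk'_surjective (AddSubgroup.zmultiples b) y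
    obtain ⟨α, ε, hg, hsum⟩ := hle g
    refine ⟨α, ?_, by omega⟩
    subst hg
    rw [map_add, map_sum, map_nsmul, hb0, smul_zero, add_zero]
    simp only [map_zsmul]
  · obtain ⟨g₀, h₀⟩ := hexact
    refine ⟨QuotientAddGroup.mk' _ g₀, ?_⟩
    intro α hy hle2
    have hmem : g₀ - ∑ i, α i • a i ∈ AddSubgroup.zmultiples b := by
      have : (QuotientAddGroup.mk' (AddSubgroup.zmultiples b)) (∑ i, α i • a i)
          = ∑ i, α i • QuotientAddGroup.mk' (AddSubgroup.zmultiples b) (a i) := by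
        rw [map_sum]; simp only [map_zsmul]
      have h2 : (QuotientAddGroup.mk' (AddSubgroup.zmultiples b))
          (g₀ - ∑ i, α i • a i) = 0 := by
        rw [map_sub, this, ← hy, sub_self]
      exact (QuotientAddGroup.eq_zero_iff _).mp h2
    obtain ⟨k, hk⟩ := AddSubgroup.mem_zmultiples_iff.mp hmem
    have hkb : k • b = ((k % 2).toNat : ℕ) • b := by
      have h2z : (2 : ℤ) • b = 0 := by
        rw [← Nat.cast_ofNat, natCast_zsmul]; exact hb
      have : k • b = (k % 2) • b := by
        conv_lhs => rw [← Int.emod_add_mul_ediv k 2]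
        rw [add_smul, mul_comm, mul_smul, h2z, smul_zero, add_zero]
      have h3 : k % 2 = ((k % 2).toNat : ℤ) :=
        (Int.toNat_of_nonneg (Int.emod_nonneg k (by norm_num))).symm
      rw [this, h3, natCast_zsmul, Int.toNat_natCast]
    have hg₀ : g₀ = (∑ i, α i • a i) + ((k % 2).toNat : ℕ) • b := by
      rw [← hkb, hk]; abel
    have hε : (k % 2).toNat ≤ 1 := by
      have h1 : k % 2 < 2 := Int.emod_lt_of_pos k (by norm_num)
      have h2 : 0 ≤ k % 2 := Int.emod_nonneg k (by norm_num)
      omega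
    exact h₀ α _ hg₀ (by omega)
end
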